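/- arXiv:2006.10240 — 3 statements merged into one kernel-verified Lean document; each statement's English description precedes it below -/
import Mathlib

section
/- Let φ₀ : (A, π₀) → (B, σ₀) be a Poisson morphism of Poisson algebras over a field of characteristic zero, and let π, σ be formal Poisson deformations of π₀, σ₀ on A[[λ]] and B[[λ]]. Suppose X_{(k)} ∈ λ·Der(B)[[λ]] is such that Φ_{(k)} := exp(X_{(k)}) satisfies Φ_{(k)}⁻¹ σ(Φ_{(k)}φ₀(a₁), Φ_{(k)}φ₀(a₂)) = φ₀(π(a₁,a₂)) + λ^{k+1} R_{k+1}(a₁,a₂) + O(λ^{k+2}) for all a₁,a₂ ∈ A. Then the bilinear map R_{k+1} : A×A → B is antisymmetric, a derivation along φ₀ in each argument, and a Chevalley–Eilenberg 2-cocycle: δR_{k+1} = 0. -/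
/-- A Poisson bracket on a commutative ring: an antisymmetric biderivation
satisfying the Jacobi identity. -/
structure IsPoissonBr {R : Type*} [CommRing R] (br : R → R → R) : Prop where
  add_left : ∀ x y z, br (x + y) z = br x z + br y z
  add_right : ∀ x y z, br x (y + z) = br x y + br x z
  antisymm : ∀ x y, br x y = - br y x
  leibniz : ∀ x y z, br x (y * z) = br x y * z + y * br x z
  jacobi : ∀ x y z, br x (br y z) = br (br x y) z + br y (br x z)

/-- `D` represents an element `X ∈ λ·Der(B)[[λ]]`, i.e. a formal derivation of `B[[λ]]`
(additive, `K`-linear, Leibniz, `λ`-linear) whose zeroth order term vanishes. -/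
def IsFormalDer (K : Type*) {B : Type*} [Field K] [CommRing B] [Algebra K B]
    (D : PowerSeries B → PowerSeries B) : Prop :=
  (∀ f g, D (f + g) = D f + D g) ∧
  (∀ (c : K) (f : PowerSeries B), D (c • f) = c • D f) ∧
  (∀ f g, D (f * g) = D f * g + f * D g) ∧
  (∀ f, D (PowerSeries.X * f) = PowerSeries.X * D f) ∧
  (∀ f, PowerSeries.coeff (R := B) 0 (D f) = 0)

/-- The exponential `exp(D) = id + D + D²/2! + ⋯`, well defined in each `λ`-order. -/
noncomputable def expF (K : Type*) {B : Type*} [Field K] [CommRing B] [Algebra K B]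
    (D : PowerSeries B → PowerSeries B) : PowerSeries B → PowerSeries B :=
  fun f => PowerSeries.mk fun n =>
    ∑ m ∈ Finset.range (n + 1), ((m.factorial : K)⁻¹) • PowerSeries.coeff (R := B) n (D^[m] f)

/-!
Conjugating `σ` by `Φ = exp X_{(k)}` gives the bracket `τ f g = Φ⁻¹ (σ (Φ f) (Φ g))`. Since `Φ` is
a ring automorphism of `B[[λ]]` commuting with `λ` and trivial modulo `λ`, `τ` is again a formal
Poisson deformation of `σ₀`, and `τ (φ₀ a₁) (φ₀ a₂) ≡ φ₀ (π a₁ a₂)` modulo `λ^{k+1}` with `R` as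
the discrepancy at order `k + 1`. Antisymmetry and the derivation properties of `R` are read off at
order `k + 1` from those of `τ` and `π`. For the cocycle identity, compare the Jacobi identities of
`τ` and `π` at order `k + 1`: in `τ (φ₀ a₁) (τ (φ₀ a₂) (φ₀ a₃))` every contribution is `φ₀` of the
matching contribution for `π`, except the two in which a single order-`k + 1` discrepancy enters,
namely `R a₁ (π₀ a₂ a₃)` and `σ₀ (φ₀ a₁) (R a₂ a₃)`; the cyclic sum of these is `δR`.
-/

open PowerSeries Finset
open scoped PowerSeries

namespace IsPoissonBr

variable {R : Type*} [CommRing R] {br : R → R → R}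

theorem map_zero_right (h : IsPoissonBr br) (x : R) : br x 0 = 0 := by
  simpa using h.add_right x 0 0

theorem map_neg_right (h : IsPoissonBr br) (x y : R) : br x (-y) = -br x y :=
  eq_neg_of_add_eq_zero_right <| by rw [← h.add_right, add_neg_cancel, h.map_zero_right]

theorem leibniz_left (h : IsPoissonBr br) (x y z : R) :
    br (x * y) z = br x z * y + x * br y z := by
  rw [h.antisymm, h.leibniz, h.antisymm z x, h.antisymm z y]
  ring

theorem jacobi_cyclic (h : IsPoissonBr br) (x y z : R) :
    br x (br y z) + br y (br z x) + br z (br x y) = 0 := by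
  rw [h.jacobi x y z, h.antisymm z x, h.map_neg_right, h.antisymm (br x y) z]
  ring

end IsPoissonBr

structure IsFormalPoissonDeformation {R : Type*} [CommRing R]
    (br : R⟦X⟧ → R⟦X⟧ → R⟦X⟧) (br₀ : R → R → R) : Prop extends IsPoissonBr br where
  X_mul_left : ∀ f g, br (X * f) g = X * br f g
  coeff_zero_C_C : ∀ a b, coeff 0 (br (C a) (C b)) = br₀ a b

namespace IsFormalPoissonDeformation

variable {R : Type*} [CommRing R] {br : R⟦X⟧ → R⟦X⟧ → R⟦X⟧} {br₀ : R → R → R}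

theorem X_mul_right (h : IsFormalPoissonDeformation br br₀) (f g : R⟦X⟧) :
    br f (X * g) = X * br f g := by
  rw [h.antisymm, h.X_mul_left, h.antisymm g, mul_neg, neg_neg]

theorem coeff_zero_apply (h : IsFormalPoissonDeformation br br₀) (f g : R⟦X⟧) :
    coeff 0 (br f g) = br₀ (coeff 0 f) (coeff 0 g) := by
  conv_lhs => rw [eq_X_mul_shift_add_const f, eq_X_mul_shift_add_const g]
  simp only [h.add_left, h.add_right, h.X_mul_left, h.X_mul_right, map_add, coeff_zero_X_mul,
    zero_add, ← coeff_zero_eq_constantCoeff_apply, h.coeff_zero_C_C]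

theorem coeff_apply_eq_sum (h : IsFormalPoissonDeformation br br₀) (f : R⟦X⟧) (n : ℕ)
    (g : R⟦X⟧) :
    coeff n (br f g) = ∑ j ∈ range (n + 1), coeff (n - j) (br f (C (coeff j g))) := by
  induction n generalizing g with
  | zero =>
    conv_lhs => rw [eq_X_mul_shift_add_const g]
    simp [h.add_right, h.X_mul_right, coeff_zero_eq_constantCoeff_apply]
  | succ n ih =>
    conv_lhs => rw [eq_X_mul_shift_add_const g]
    rw [h.add_right, h.X_mul_right, map_add, coeff_succ_X_mul, ih, sum_range_succ' _ (n + 1)]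
    simp [coeff_zero_eq_constantCoeff_apply]

theorem conj (h : IsFormalPoissonDeformation br br₀) (e : R⟦X⟧ ≃+* R⟦X⟧)
    (he_X : ∀ f, e (X * f) = X * e f) (he_coeff : ∀ f, coeff 0 (e f) = coeff 0 f) :
    IsFormalPoissonDeformation (fun f g => e.symm (br (e f) (e g))) br₀ := by
  have he_symm_X (f : R⟦X⟧) : e.symm (X * f) = X * e.symm f :=
    e.symm_apply_eq.2 (by rw [he_X, e.apply_symm_apply])
  refine
    { add_left := fun x y z => by simp only [map_add, h.add_left]
      add_right := fun x y z => by simp only [map_add, h.add_right]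
      antisymm := fun x y => by rw [h.antisymm, map_neg]
      leibniz := fun x y z => by
        rw [map_mul, h.leibniz, map_add, map_mul, map_mul, e.symm_apply_apply, e.symm_apply_apply]
      jacobi := fun x y z => by simp only [e.apply_symm_apply]; rw [h.jacobi, map_add]
      X_mul_left := fun f g => by rw [he_X, h.X_mul_left, he_symm_X]
      coeff_zero_C_C := fun a b => ?_ }
  rw [← he_coeff (e.symm _), e.apply_symm_apply, h.coeff_zero_apply, he_coeff, he_coeff,
    coeff_zero_C, coeff_zero_C]

end IsFormalPoissonDeformation

structure IsObstruction {A B : Type*} [CommRing A] [CommRing B]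
    (τ : B⟦X⟧ → B⟦X⟧ → B⟦X⟧) (π : A⟦X⟧ → A⟦X⟧ → A⟦X⟧) (φ₀ : A →+* B) (k : ℕ)
    (R : A → A → B) : Prop where
  coeff_of_le : ∀ a b m, m ≤ k → coeff m (τ (C (φ₀ a)) (C (φ₀ b))) = φ₀ (coeff m (π (C a) (C b)))
  coeff_succ : ∀ a b,
    coeff (k + 1) (τ (C (φ₀ a)) (C (φ₀ b))) = φ₀ (coeff (k + 1) (π (C a) (C b))) + R a b

namespace IsObstruction

variable {A B : Type*} [CommRing A] [CommRing B] {τ : B⟦X⟧ → B⟦X⟧ → B⟦X⟧}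
  {π : A⟦X⟧ → A⟦X⟧ → A⟦X⟧} {φ₀ : A →+* B} {k : ℕ} {R : A → A → B}

theorem eq_sub (hR : IsObstruction τ π φ₀ k R) (a b : A) :
    R a b = coeff (k + 1) (τ (C (φ₀ a)) (C (φ₀ b))) - φ₀ (coeff (k + 1) (π (C a) (C b))) := by
  rw [hR.coeff_succ]
  ring

theorem antisymm (hR : IsObstruction τ π φ₀ k R) (hτ : IsPoissonBr τ) (hπ : IsPoissonBr π)
    (a b : A) : R a b = -R b a := by
  rw [hR.eq_sub, hR.eq_sub, hτ.antisymm, hπ.antisymm]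
  simp only [map_neg]
  ring

theorem map_add_left (hR : IsObstruction τ π φ₀ k R) (hτ : IsPoissonBr τ) (hπ : IsPoissonBr π)
    (a a' b : A) : R (a + a') b = R a b + R a' b := by
  simp only [hR.eq_sub, map_add, hτ.add_left, hπ.add_left]
  ring

theorem map_mul_left (hR : IsObstruction τ π φ₀ k R) (hτ : IsPoissonBr τ) (hπ : IsPoissonBr π)
    (a a' b : A) : R (a * a') b = φ₀ a * R a' b + R a b * φ₀ a' := by
  simp only [hR.eq_sub, map_mul, hτ.leibniz_left, hπ.leibniz_left, map_add, coeff_mul_C,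
    coeff_C_mul]
  ring

theorem map_add_right (hR : IsObstruction τ π φ₀ k R) (hτ : IsPoissonBr τ) (hπ : IsPoissonBr π)
    (a b b' : A) : R a (b + b') = R a b + R a b' := by
  rw [hR.antisymm hτ hπ, hR.map_add_left hτ hπ, hR.antisymm hτ hπ b, hR.antisymm hτ hπ b']
  ring

theorem map_mul_right (hR : IsObstruction τ π φ₀ k R) (hτ : IsPoissonBr τ) (hπ : IsPoissonBr π)
    (a b b' : A) : R a (b * b') = φ₀ b * R a b' + R a b * φ₀ b' := by
  rw [hR.antisymm hτ hπ, hR.map_mul_left hτ hπ, hR.antisymm hτ hπ b, hR.antisymm hτ hπ b']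
  ring

variable {σ₀ : B → B → B} {π₀ : A → A → A}

theorem coeff_succ_apply (hR : IsObstruction τ π φ₀ k R)
    (hτ : IsFormalPoissonDeformation τ σ₀) (hπ : IsFormalPoissonDeformation π π₀) (a : A)
    {g : B⟦X⟧} {h : A⟦X⟧} (r : B) (hlow : ∀ m ≤ k, coeff m g = φ₀ (coeff m h))
    (htop : coeff (k + 1) g = φ₀ (coeff (k + 1) h) + r) :
    coeff (k + 1) (τ (C (φ₀ a)) g)
      = φ₀ (coeff (k + 1) (π (C a) h)) + R a (coeff 0 h) + σ₀ (φ₀ a) r := by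
  rw [hτ.coeff_apply_eq_sum, hπ.coeff_apply_eq_sum, map_sum]
  simp only [sum_range_succ' _ (k + 1), sum_range_succ _ k]
  have hmid : ∀ i ∈ range k, coeff (k + 1 - (i + 1)) (τ (C (φ₀ a)) (C (coeff (i + 1) g)))
      = φ₀ (coeff (k + 1 - (i + 1)) (π (C a) (C (coeff (i + 1) h)))) := fun i hi => by
    rw [mem_range] at hi
    rw [hlow (i + 1) hi, hR.coeff_of_le _ _ _ (by omega)]
  rw [sum_congr rfl hmid, htop, hlow 0 k.zero_le, map_add, hτ.add_right, map_add, Nat.sub_self,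
    hR.coeff_of_le _ _ 0 k.zero_le, hτ.coeff_zero_apply, coeff_zero_C, coeff_zero_C,
    Nat.sub_zero, hR.coeff_succ]
  ring

theorem isCocycle (hR : IsObstruction τ π φ₀ k R) (hτ : IsFormalPoissonDeformation τ σ₀)
    (hπ : IsFormalPoissonDeformation π π₀) (a₁ a₂ a₃ : A) :
    σ₀ (φ₀ a₁) (R a₂ a₃) + σ₀ (φ₀ a₂) (R a₃ a₁) + σ₀ (φ₀ a₃) (R a₁ a₂)
      + R a₁ (π₀ a₂ a₃) + R a₂ (π₀ a₃ a₁) + R a₃ (π₀ a₁ a₂) = 0 := by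
  have hnested (a b c : A) : coeff (k + 1) (τ (C (φ₀ a)) (τ (C (φ₀ b)) (C (φ₀ c))))
      = φ₀ (coeff (k + 1) (π (C a) (π (C b) (C c)))) + R a (π₀ b c) + σ₀ (φ₀ a) (R b c) := by
    rw [hR.coeff_succ_apply hτ hπ a (R b c) (hR.coeff_of_le b c) (hR.coeff_succ b c),
      hπ.coeff_zero_C_C]
  have hB := congrArg (coeff (k + 1)) (hτ.jacobi_cyclic (C (φ₀ a₁)) (C (φ₀ a₂)) (C (φ₀ a₃)))
  have hA := congrArg (fun f => φ₀ (coeff (k + 1) f)) (hπ.jacobi_cyclic (C a₁) (C a₂) (C a₃))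
  simp only [map_add, map_zero, hnested] at hA hB
  linear_combination hB - hA

end IsObstruction

theorem coeff_eq_of_X_pow_dvd_sub {R : Type*} [CommRing R] {f g : R⟦X⟧} {n N : ℕ}
    (h : X ^ N ∣ f - g) (hn : n < N) : coeff n f = coeff n g :=
  sub_eq_zero.1 <| by rw [← map_sub]; exact X_pow_dvd_iff.1 h n hn

theorem Finset.sum_range_sum_range_eq_sum_range_diag {M : Type*} [AddCommMonoid M] {N : ℕ}
    {t : ℕ → ℕ → M} (ht : ∀ i j, N ≤ i + j → t i j = 0) :
    ∑ i ∈ range N, ∑ j ∈ range N, t i j = ∑ s ∈ range N, ∑ i ∈ range (s + 1), t i (s - i) := by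
  rw [sum_range_diag_flip]
  refine sum_congr rfl fun i _ => (sum_subset (range_subset_range.2 (N.sub_le i)) ?_).symm
  intro j _ hj
  rw [mem_range, not_lt] at hj
  exact ht i j (by omega)

theorem inv_factorial_mul_inv_factorial_sub (K : Type*) [Field K] [CharZero K] {i s : ℕ}
    (h : i ≤ s) : (i.factorial : K)⁻¹ * ((s - i).factorial : K)⁻¹
      = (s.factorial : K)⁻¹ * s.choose i := by
  have hs : (s.factorial : K) ≠ 0 := Nat.cast_ne_zero.2 s.factorial_ne_zero
  rw [Nat.cast_choose K h]
  field_simp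

theorem sum_range_neg_one_pow_mul_inv_factorial_mul_inv_factorial (K : Type*) [Field K]
    [CharZero K] (s : ℕ) :
    ∑ m ∈ range (s + 1), (-1 : K) ^ m * ((m.factorial : K)⁻¹ * ((s - m).factorial : K)⁻¹)
      = if s = 0 then 1 else 0 := by
  have hchoose := congrArg (Int.cast : ℤ → K) (Int.alternating_sum_range_choose (n := s))
  push_cast at hchoose
  rw [sum_congr rfl fun m hm => by
    rw [inv_factorial_mul_inv_factorial_sub K (Nat.lt_succ_iff.1 (mem_range.1 hm)), mul_left_comm],
    ← mul_sum, hchoose]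
  split_ifs with hs
  · simp [hs]
  · simp

namespace IsFormalDer

variable {K B : Type*} [Field K] [CommRing B] [Algebra K B] {D : B⟦X⟧ → B⟦X⟧}

def toLinearMap (hD : IsFormalDer K D) : Module.End K B⟦X⟧ where
  toFun := D
  map_add' := hD.1
  map_smul' := hD.2.1

theorem toLinearMap_apply (hD : IsFormalDer K D) (f : B⟦X⟧) : hD.toLinearMap f = D f := rfl

theorem leibniz (hD : IsFormalDer K D) (f g : B⟦X⟧) : D (f * g) = D f * g + f * D g :=
  hD.2.2.1 f g

theorem X_mul (hD : IsFormalDer K D) (f : B⟦X⟧) : D (X * f) = X * D f := hD.2.2.2.1 f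

theorem coeff_zero_apply (hD : IsFormalDer K D) (f : B⟦X⟧) : coeff 0 (D f) = 0 := hD.2.2.2.2 f

theorem iterate_eq_pow (hD : IsFormalDer K D) (m : ℕ) : D^[m] = ⇑(hD.toLinearMap ^ m) :=
  (Module.End.coe_pow hD.toLinearMap m).symm

theorem neg (hD : IsFormalDer K D) : IsFormalDer K (fun g => -(D g)) := by
  obtain ⟨hadd, hsmul, hleib, hX, h0⟩ := hD
  exact ⟨fun f g => by simp only [hadd, neg_add], fun c f => by simp only [hsmul, smul_neg],
    fun f g => by simp only [hleib, neg_add, neg_mul, mul_neg],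
    fun f => by simp only [hX, mul_neg], fun f => by rw [map_neg, h0, neg_zero]⟩

theorem iterate_neg (hD : IsFormalDer K D) (m : ℕ) (f : B⟦X⟧) :
    (fun g => -(D g))^[m] f = (-1 : K) ^ m • D^[m] f := by
  have hneg : hD.neg.toLinearMap = (-1 : K) • hD.toLinearMap := by
    ext g
    simp only [toLinearMap_apply, LinearMap.smul_apply, neg_one_smul]
  rw [hD.neg.iterate_eq_pow, hD.iterate_eq_pow, hneg, smul_pow, LinearMap.smul_apply]

theorem X_pow_mul (hD : IsFormalDer K D) (j : ℕ) (f : B⟦X⟧) : D (X ^ j * f) = X ^ j * D f := by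
  induction j generalizing f with
  | zero => simp
  | succ j ih => rw [pow_succ, mul_assoc, ih, hD.X_mul, mul_assoc]

theorem iterate_X_pow_mul (hD : IsFormalDer K D) (m j : ℕ) (f : B⟦X⟧) :
    D^[m] (X ^ j * f) = X ^ j * D^[m] f :=
  Function.Commute.iterate_left (fun f => hD.X_pow_mul j f) m f

theorem X_pow_dvd_iterate (hD : IsFormalDer K D) (m : ℕ) (f : B⟦X⟧) : X ^ m ∣ D^[m] f := by
  induction m with
  | zero => simp
  | succ m ih =>
    obtain ⟨g, hg⟩ := ih
    obtain ⟨g', hg'⟩ : X ∣ D g := by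
      rw [X_dvd_iff, ← coeff_zero_eq_constantCoeff_apply]
      exact hD.coeff_zero_apply g
    exact ⟨g', by rw [Function.iterate_succ_apply', hg, hD.X_pow_mul, hg', pow_succ, mul_assoc]⟩

theorem coeff_iterate_of_lt (hD : IsFormalDer K D) {n m : ℕ} (h : n < m) (f : B⟦X⟧) :
    coeff n (D^[m] f) = 0 :=
  X_pow_dvd_iff.1 (hD.X_pow_dvd_iterate m f) n h

theorem iterate_mul (hD : IsFormalDer K D) (n : ℕ) (f g : B⟦X⟧) :
    D^[n] (f * g) = ∑ ij ∈ antidiagonal n, n.choose ij.1 • (D^[ij.1] f * D^[ij.2] g) := by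
  induction n with
  | zero => simp
  | succ n ih =>
    rw [sum_antidiagonal_choose_succ_nsmul (fun i j => D^[i] f * D^[j] g) n,
      Function.iterate_succ_apply', ih]
    change hD.toLinearMap _ = _
    simp only [map_sum, map_nsmul, toLinearMap_apply, hD.leibniz, Function.iterate_succ_apply',
      smul_add, sum_add_distrib, add_comm]
    refine congrArg₂ _ rfl (sum_congr rfl fun ⟨i, j⟩ hij => ?_)
    rw [n.choose_symm_of_eq_add (mem_antidiagonal.1 hij).symm]

theorem coeff_expF_eq_sum_range (hD : IsFormalDer K D) (f : B⟦X⟧) {n N : ℕ} (h : n < N) :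
    coeff n (expF K D f) = ∑ m ∈ range N, (m.factorial : K)⁻¹ • coeff n (D^[m] f) := by
  rw [expF, coeff_mk]
  refine sum_subset (range_subset_range.2 h) fun m _ hm => ?_
  rw [mem_range, not_lt] at hm
  rw [hD.coeff_iterate_of_lt (by omega), smul_zero]

theorem X_pow_dvd_expF_sub_sum (hD : IsFormalDer K D) (f : B⟦X⟧) (N : ℕ) :
    X ^ N ∣ expF K D f - ∑ m ∈ range N, (m.factorial : K)⁻¹ • D^[m] f := by
  refine X_pow_dvd_iff.2 fun n hn => ?_
  rw [map_sub, hD.coeff_expF_eq_sum_range f hn, map_sum, sub_eq_zero]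
  simp only [coeff_smul]

theorem coeff_zero_expF (hD : IsFormalDer K D) (f : B⟦X⟧) : coeff 0 (expF K D f) = coeff 0 f := by
  simp [hD.coeff_expF_eq_sum_range f zero_lt_one]

theorem expF_add (hD : IsFormalDer K D) (f g : B⟦X⟧) :
    expF K D (f + g) = expF K D f + expF K D g := by
  ext n
  simp only [expF, coeff_mk, map_add, hD.iterate_eq_pow, smul_add, sum_add_distrib]

theorem expF_sub (hD : IsFormalDer K D) (f g : B⟦X⟧) :
    expF K D (f - g) = expF K D f - expF K D g :=
  eq_sub_of_add_eq (by rw [← hD.expF_add, sub_add_cancel])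

theorem expF_X_pow_mul (hD : IsFormalDer K D) (N : ℕ) (f : B⟦X⟧) :
    expF K D (X ^ N * f) = X ^ N * expF K D f := by
  ext n
  rw [hD.coeff_expF_eq_sum_range _ n.lt_succ_self, coeff_X_pow_mul']
  simp only [hD.iterate_X_pow_mul, coeff_X_pow_mul']
  split_ifs with hN
  · rw [hD.coeff_expF_eq_sum_range _ (by omega : n - N < n + 1)]
  · simp

theorem expF_X_mul (hD : IsFormalDer K D) (f : B⟦X⟧) : expF K D (X * f) = X * expF K D f := by
  simpa using hD.expF_X_pow_mul 1 f

theorem X_pow_dvd_expF_sub_expF (hD : IsFormalDer K D) {f g : B⟦X⟧} {N : ℕ}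
    (h : X ^ N ∣ f - g) : X ^ N ∣ expF K D f - expF K D g := by
  obtain ⟨u, hu⟩ := h
  exact ⟨expF K D u, by rw [← hD.expF_sub, hu, hD.expF_X_pow_mul]⟩

variable [CharZero K]

theorem expF_mul (hD : IsFormalDer K D) (f g : B⟦X⟧) :
    expF K D (f * g) = expF K D f * expF K D g := by
  ext n
  set t : ℕ → ℕ → B := fun i j =>
    ((i.factorial : K)⁻¹ * (j.factorial : K)⁻¹) • coeff n (D^[i] f * D^[j] g)
  have hprod : coeff n (expF K D f * expF K D g)
      = ∑ i ∈ range (n + 1), ∑ j ∈ range (n + 1), t i j := by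
    rw [coeff_eq_of_X_pow_dvd_sub (dvd_mul_sub_mul (hD.X_pow_dvd_expF_sub_sum f (n + 1))
      (hD.X_pow_dvd_expF_sub_sum g (n + 1))) n.lt_succ_self, sum_mul_sum, map_sum]
    simp only [map_sum, smul_mul_smul_comm, coeff_smul, t]
  have hexp : coeff n (expF K D (f * g))
      = ∑ s ∈ range (n + 1), ∑ i ∈ range (s + 1), t i (s - i) := by
    rw [hD.coeff_expF_eq_sum_range _ n.lt_succ_self]
    refine sum_congr rfl fun s _ => ?_
    rw [hD.iterate_mul, Nat.sum_antidiagonal_eq_sum_range_succ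
      (fun i j => s.choose i • (D^[i] f * D^[j] g)), map_sum, smul_sum]
    refine sum_congr rfl fun i hi => ?_
    rw [map_nsmul, ← Nat.cast_smul_eq_nsmul K, smul_smul,
      ← inv_factorial_mul_inv_factorial_sub K (Nat.lt_succ_iff.1 (mem_range.1 hi))]
  rw [hexp, hprod, sum_range_sum_range_eq_sum_range_diag fun i j hij => ?_]
  have hdvd : X ^ (i + j) ∣ D^[i] f * D^[j] g := by
    rw [pow_add]
    exact mul_dvd_mul (hD.X_pow_dvd_iterate i f) (hD.X_pow_dvd_iterate j g)
  simp only [t, X_pow_dvd_iff.1 hdvd n (by omega), smul_zero]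

theorem expF_neg_expF (hD : IsFormalDer K D) (f : B⟦X⟧) :
    expF K (fun g => -(D g)) (expF K D f) = f := by
  ext n
  set t : ℕ → ℕ → B := fun m j =>
    ((-1 : K) ^ m * ((m.factorial : K)⁻¹ * (j.factorial : K)⁻¹)) • coeff n (D^[m + j] f)
  have htrunc : coeff n (expF K (fun g => -(D g)) (expF K D f))
      = ∑ m ∈ range (n + 1), ∑ j ∈ range (n + 1), t m j := by
    rw [coeff_eq_of_X_pow_dvd_sub (hD.neg.X_pow_dvd_expF_sub_expF
      (hD.X_pow_dvd_expF_sub_sum f (n + 1))) n.lt_succ_self,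
      hD.neg.coeff_expF_eq_sum_range _ n.lt_succ_self]
    refine sum_congr rfl fun m _ => ?_
    rw [hD.iterate_neg, hD.iterate_eq_pow, map_sum, coeff_smul, map_sum, smul_sum, smul_sum]
    refine sum_congr rfl fun j _ => ?_
    rw [map_smul, coeff_smul, smul_smul, smul_smul, ← hD.iterate_eq_pow,
      ← Function.iterate_add_apply]
    simp only [t]
    congr 1
    ring
  rw [htrunc, sum_range_sum_range_eq_sum_range_diag fun m j h => by
    simp only [t, hD.coeff_iterate_of_lt (n := n) (m := m + j) (by omega), smul_zero]]
  have hdiag : ∀ s ∈ range (n + 1), ∑ m ∈ range (s + 1), t m (s - m)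
      = (if s = 0 then (1 : K) else 0) • coeff n (D^[s] f) := fun s _ => by
    rw [← sum_range_neg_one_pow_mul_inv_factorial_mul_inv_factorial K s, sum_smul]
    refine sum_congr rfl fun m hm => ?_
    simp only [t]
    rw [Nat.add_sub_cancel' (Nat.lt_succ_iff.1 (mem_range.1 hm))]
  rw [sum_congr rfl hdiag, sum_eq_single 0 (fun s _ hs => by rw [if_neg hs, zero_smul])
    (fun h => absurd (mem_range.2 n.succ_pos) h)]
  simp

noncomputable def expRingEquiv (hD : IsFormalDer K D) : B⟦X⟧ ≃+* B⟦X⟧ where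
  toFun := expF K D
  invFun := expF K (fun g => -(D g))
  left_inv := hD.expF_neg_expF
  right_inv f := by simpa only [neg_neg] using hD.neg.expF_neg_expF f
  map_mul' := hD.expF_mul
  map_add' := hD.expF_add

end IsFormalDer

theorem stmt_8_general {K A B : Type*} [Field K] [CharZero K] [CommRing A] [CommRing B]
    [Algebra K B]
    (π₀ : A → A → A) (σ₀ : B → B → B)
    (φ₀ : A →+* B)
    -- formal Poisson deformations of π₀ and σ₀
    (π : PowerSeries A → PowerSeries A → PowerSeries A)
    (σ : PowerSeries B → PowerSeries B → PowerSeries B)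
    (hπ : IsPoissonBr π) (hσ : IsPoissonBr σ)
    (hπX : ∀ f g, π (PowerSeries.X * f) g = PowerSeries.X * π f g)
    (hσX : ∀ f g, σ (PowerSeries.X * f) g = PowerSeries.X * σ f g)
    (hπ0 : ∀ a b : A, PowerSeries.coeff (R := A) 0 (π (PowerSeries.C (R := A) a) (PowerSeries.C (R := A) b))
       = π₀ a b)
    (hσ0 : ∀ a b : B, PowerSeries.coeff (R := B) 0 (σ (PowerSeries.C (R := B) a) (PowerSeries.C (R := B) b))
       = σ₀ a b)
    -- X_{(k)} ∈ λ·Der(B)[[λ]] and Φ_{(k)} = exp(X_{(k)})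
    (D : PowerSeries B → PowerSeries B) (hD : IsFormalDer K D)
    (k : ℕ) (R : A → A → B)
    -- defining property of R_{k+1}
    (hlow : ∀ (a₁ a₂ : A) (m : ℕ), m ≤ k →
      PowerSeries.coeff (R := B) m
        (expF K (fun g => -(D g))
          (σ (expF K D (PowerSeries.C (R := B) (φ₀ a₁))) (expF K D (PowerSeries.C (R := B) (φ₀ a₂))))) =
      PowerSeries.coeff (R := B) m
        (PowerSeries.map (φ₀ : A →+* B) (π (PowerSeries.C (R := A) a₁) (PowerSeries.C (R := A) a₂))))
    (htop : ∀ a₁ a₂ : A,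
      PowerSeries.coeff (R := B) (k + 1)
        (expF K (fun g => -(D g))
          (σ (expF K D (PowerSeries.C (R := B) (φ₀ a₁))) (expF K D (PowerSeries.C (R := B) (φ₀ a₂))))) =
      PowerSeries.coeff (R := B) (k + 1)
        (PowerSeries.map (φ₀ : A →+* B) (π (PowerSeries.C (R := A) a₁) (PowerSeries.C (R := A) a₂)))
        + R a₁ a₂) :
    (∀ a b, R a b = - R b a) ∧
    (∀ a a' b, R (a + a') b = R a b + R a' b) ∧
    (∀ a b b', R a (b + b') = R a b + R a b') ∧
    (∀ a a' b, R (a * a') b = φ₀ a * R a' b + R a b * φ₀ a') ∧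
    (∀ a b b', R a (b * b') = φ₀ b * R a b' + R a b * φ₀ b') ∧
    (∀ a₁ a₂ a₃,
      σ₀ (φ₀ a₁) (R a₂ a₃) + σ₀ (φ₀ a₂) (R a₃ a₁) + σ₀ (φ₀ a₃) (R a₁ a₂)
      + R a₁ (π₀ a₂ a₃) + R a₂ (π₀ a₃ a₁) + R a₃ (π₀ a₁ a₂) = 0) := by
  have hπ' : IsFormalPoissonDeformation π π₀ := ⟨hπ, hπX, hπ0⟩
  have hτ : IsFormalPoissonDeformation
      (fun f g => expF K (fun g => -(D g)) (σ (expF K D f) (expF K D g))) σ₀ :=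
    IsFormalPoissonDeformation.conj ⟨hσ, hσX, hσ0⟩ hD.expRingEquiv hD.expF_X_mul hD.coeff_zero_expF
  have hR : IsObstruction (fun f g => expF K (fun g => -(D g)) (σ (expF K D f) (expF K D g)))
      π φ₀ k R :=
    ⟨fun a b m hm => by simpa only [coeff_map] using hlow a b m hm,
      fun a b => by simpa only [coeff_map] using htop a b⟩
  exact ⟨hR.antisymm hτ.toIsPoissonBr hπ, hR.map_add_left hτ.toIsPoissonBr hπ,
    hR.map_add_right hτ.toIsPoissonBr hπ, hR.map_mul_left hτ.toIsPoissonBr hπ,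
    hR.map_mul_right hτ.toIsPoissonBr hπ, hR.isCocycle hτ hπ'⟩

theorem stmt_8 {K A B : Type*} [Field K] [CharZero K] [CommRing A] [CommRing B]
    [Algebra K B]
    (π₀ : A → A → A) (σ₀ : B → B → B)
    (hπ₀ : IsPoissonBr π₀) (hσ₀ : IsPoissonBr σ₀)
    (φ₀ : A →+* B) (hφ₀ : ∀ x y, φ₀ (π₀ x y) = σ₀ (φ₀ x) (φ₀ y))
    -- formal Poisson deformations of π₀ and σ₀
    (π : PowerSeries A → PowerSeries A → PowerSeries A)
    (σ : PowerSeries B → PowerSeries B → PowerSeries B)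
    (hπ : IsPoissonBr π) (hσ : IsPoissonBr σ)
    (hπX : ∀ f g, π (PowerSeries.X * f) g = PowerSeries.X * π f g)
    (hσX : ∀ f g, σ (PowerSeries.X * f) g = PowerSeries.X * σ f g)
    (hπ0 : ∀ a b : A, PowerSeries.coeff (R := A) 0 (π (PowerSeries.C (R := A) a) (PowerSeries.C (R := A) b))
       = π₀ a b)
    (hσ0 : ∀ a b : B, PowerSeries.coeff (R := B) 0 (σ (PowerSeries.C (R := B) a) (PowerSeries.C (R := B) b))
       = σ₀ a b)
    -- X_{(k)} ∈ λ·Der(B)[[λ]] and Φ_{(k)} = exp(X_{(k)})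
    (D : PowerSeries B → PowerSeries B) (hD : IsFormalDer K D)
    (k : ℕ) (R : A → A → B)
    -- defining property of R_{k+1}
    (hlow : ∀ (a₁ a₂ : A) (m : ℕ), m ≤ k →
      PowerSeries.coeff (R := B) m
        (expF K (fun g => -(D g))
          (σ (expF K D (PowerSeries.C (R := B) (φ₀ a₁))) (expF K D (PowerSeries.C (R := B) (φ₀ a₂))))) =
      PowerSeries.coeff (R := B) m
        (PowerSeries.map (φ₀ : A →+* B) (π (PowerSeries.C (R := A) a₁) (PowerSeries.C (R := A) a₂))))
    (htop : ∀ a₁ a₂ : A,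
      PowerSeries.coeff (R := B) (k + 1)
        (expF K (fun g => -(D g))
          (σ (expF K D (PowerSeries.C (R := B) (φ₀ a₁))) (expF K D (PowerSeries.C (R := B) (φ₀ a₂))))) =
      PowerSeries.coeff (R := B) (k + 1)
        (PowerSeries.map (φ₀ : A →+* B) (π (PowerSeries.C (R := A) a₁) (PowerSeries.C (R := A) a₂)))
        + R a₁ a₂) :
    (∀ a b, R a b = - R b a) ∧
    (∀ a a' b, R (a + a') b = R a b + R a' b) ∧
    (∀ a b b', R a (b + b') = R a b + R a b') ∧
    (∀ a a' b, R (a * a') b = φ₀ a * R a' b + R a b * φ₀ a') ∧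
    (∀ a b b', R a (b * b') = φ₀ b * R a b' + R a b * φ₀ b') ∧
    (∀ a₁ a₂ a₃,
      σ₀ (φ₀ a₁) (R a₂ a₃) + σ₀ (φ₀ a₂) (R a₃ a₁) + σ₀ (φ₀ a₃) (R a₁ a₂)
      + R a₁ (π₀ a₂ a₃) + R a₂ (π₀ a₃ a₁) + R a₃ (π₀ a₁ a₂) = 0) :=
  stmt_8_general π₀ σ₀ φ₀ π σ hπ hσ hπX hσX hπ0 hσ0 D hD k R hlow htop
end

section
/- Let U ⊆ ℝⁿ be open with coordinates (q¹,…,qⁿ) and T*U = U × ℝⁿ with coordinates (q,p). Define Ψ : C^k_{CE,der}(U, T*U) → Ω^k_V(T*U) sending Σ_{I_k} D^{I_k} ∂/∂q^{I_k} to Σ_{I_k} D^{I_k} dp_{I_k}, where Ω^k_V are vertical forms (spanned over C^∞(T*U) by the dp_{I_k}). Then Ψ intertwines the Chevalley–Eilenberg differential δ (with respect to the canonical symplectic bracket on T*U and zero bracket on U) with the vertical de Rham differential d_ver: d_ver ∘ Ψ = Ψ ∘ δ. -/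
/-- A point of `T*U = U × ℝⁿ`, with coordinates `(q, p)`. -/
abbrev Pt (n : ℕ) := (Fin n → ℝ) × (Fin n → ℝ)

/-- `∂F/∂qⁱ` on `T*U`. -/
noncomputable def dq {n : ℕ} (i : Fin n) (F : Pt n → ℝ) : Pt n → ℝ :=
  fun z => fderiv ℝ F z ((Pi.single i 1 : Fin n → ℝ), (0 : Fin n → ℝ))

/-- `∂F/∂pᵢ` on `T*U`. -/
noncomputable def dp {n : ℕ} (i : Fin n) (F : Pt n → ℝ) : Pt n → ℝ :=
  fun z => fderiv ℝ F z ((0 : Fin n → ℝ), (Pi.single i 1 : Fin n → ℝ))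

/-- The canonical Poisson bracket on `T*U`, normalized so that `{ρ*qⁱ, g} = ∂g/∂pᵢ`. -/
noncomputable def canBr {n : ℕ} (F G : Pt n → ℝ) : Pt n → ℝ :=
  fun z => ∑ i : Fin n, (dq i F z * dp i G z - dp i F z * dq i G z)

/-- `∂f/∂qⁱ` on the base `U`. -/
noncomputable def dqb {n : ℕ} (i : Fin n) (f : (Fin n → ℝ) → ℝ) : (Fin n → ℝ) → ℝ :=
  fun q => fderiv ℝ f q (Pi.single i 1)

/-- The multiderivation cochain `Σ_ι D^ι ∂/∂q^ι ∈ C^k_{CE,der}(U, T*U)` determined by a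
coefficient family `D`, evaluated on functions `f₁, …, f_k` on the base. -/
noncomputable def cochainOf {n : ℕ} (k : ℕ) (D : (Fin k → Fin n) → Pt n → ℝ)
    (f : Fin k → (Fin n → ℝ) → ℝ) : Pt n → ℝ :=
  fun z => ∑ ι : Fin k → Fin n, D ι z * ∏ a : Fin k, dqb (ι a) (f a) z.1

/-- The Chevalley–Eilenberg differential relative to the canonical symplectic bracket on
`T*U` and the zero bracket on `U`:
`(δT)(f₀,…,f_k) = Σ_j (−1)^j {ρ*f_j, T(…,f̂_j,…)}_can`. -/
noncomputable def ceD {n : ℕ} (k : ℕ) (T : (Fin k → (Fin n → ℝ) → ℝ) → Pt n → ℝ)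
    (f : Fin (k + 1) → (Fin n → ℝ) → ℝ) : Pt n → ℝ :=
  fun z => ∑ j : Fin (k + 1),
    (-1 : ℝ) ^ (j : ℕ) *
      canBr (fun w => f j w.1) (T fun i => f (j.succAbove i)) z

/-- The vertical de Rham differential on coefficient families of vertical forms
`Σ_ι E^ι dp_ι`. -/
noncomputable def dver {n : ℕ} (k : ℕ) (D : (Fin k → Fin n) → Pt n → ℝ) :
    (Fin (k + 1) → Fin n) → Pt n → ℝ :=
  fun ι z => ∑ l : Fin (k + 1),
    (-1 : ℝ) ^ (l : ℕ) * dp (ι l) (D fun m => ι (l.succAbove m)) z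


section Helpers

lemma contDiff_dqb {n : ℕ} (i : Fin n) {g : (Fin n → ℝ) → ℝ} (hg : ContDiff ℝ (⊤ : ℕ∞) g) :
    ContDiff ℝ (⊤ : ℕ∞) (dqb i g) := by
  have h1 : ContDiff ℝ (⊤ : ℕ∞) (fderiv ℝ g) := hg.fderiv_right (by simp)
  exact (ContinuousLinearMap.apply ℝ ℝ (Pi.single i 1 : Fin n → ℝ)).contDiff.comp h1

lemma hasFDerivAt_comp_fst {n : ℕ} {g : (Fin n → ℝ) → ℝ} (z : Pt n)
    (hg : DifferentiableAt ℝ g z.1) :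
    HasFDerivAt (fun w : Pt n => g w.1)
      ((fderiv ℝ g z.1).comp (ContinuousLinearMap.fst ℝ (Fin n → ℝ) (Fin n → ℝ))) z :=
  hg.hasFDerivAt.comp z hasFDerivAt_fst

lemma dp_comp_fst {n : ℕ} (i : Fin n) {g : (Fin n → ℝ) → ℝ} (z : Pt n)
    (hg : DifferentiableAt ℝ g z.1) : dp i (fun w : Pt n => g w.1) z = 0 := by
  simp [dp, (hasFDerivAt_comp_fst z hg).fderiv]

lemma dq_comp_fst {n : ℕ} (i : Fin n) {g : (Fin n → ℝ) → ℝ} (z : Pt n)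
    (hg : DifferentiableAt ℝ g z.1) : dq i (fun w : Pt n => g w.1) z = dqb i g z.1 := by
  simp [dq, dqb, (hasFDerivAt_comp_fst z hg).fderiv]

lemma dp_sum {n : ℕ} (i : Fin n) {α : Type*} (s : Finset α) (F : α → Pt n → ℝ) (z : Pt n)
    (h : ∀ a ∈ s, DifferentiableAt ℝ (F a) z) :
    dp i (fun w => ∑ a ∈ s, F a w) z = ∑ a ∈ s, dp i (F a) z := by
  simp [dp, fderiv_fun_sum h]

lemma dp_mul {n : ℕ} (i : Fin n) {F G : Pt n → ℝ} (z : Pt n)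
    (hF : DifferentiableAt ℝ F z) (hG : DifferentiableAt ℝ G z) :
    dp i (fun w => F w * G w) z = dp i F z * G z + F z * dp i G z := by
  simp [dp, fderiv_fun_mul hF hG]; ring

lemma contDiff_prodFactor {n k : ℕ} (ι : Fin k → Fin n) (g : Fin k → (Fin n → ℝ) → ℝ)
    (hg : ∀ a, ContDiff ℝ (⊤ : ℕ∞) (g a)) :
    ContDiff ℝ (⊤ : ℕ∞) (fun q : Fin n → ℝ => ∏ a : Fin k, dqb (ι a) (g a) q) :=
  contDiff_prod (fun a _ => contDiff_dqb (ι a) (hg a))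

lemma dp_cochain {n k : ℕ} (i : Fin n) (D : (Fin k → Fin n) → Pt n → ℝ)
    (hD : ∀ ι, ContDiff ℝ (⊤ : ℕ∞) (D ι)) (g : Fin k → (Fin n → ℝ) → ℝ)
    (hg : ∀ a, ContDiff ℝ (⊤ : ℕ∞) (g a)) (z : Pt n) :
    dp i (cochainOf k D g) z
      = ∑ ι : Fin k → Fin n, dp i (D ι) z * ∏ a : Fin k, dqb (ι a) (g a) z.1 := by
  have hP : ∀ ι : Fin k → Fin n,
      ContDiff ℝ (⊤ : ℕ∞) (fun q : Fin n → ℝ => ∏ a : Fin k, dqb (ι a) (g a) q) :=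
    fun ι => contDiff_prodFactor ι g hg
  have hPz : ∀ ι : Fin k → Fin n, DifferentiableAt ℝ
      (fun w : Pt n => ∏ a : Fin k, dqb (ι a) (g a) w.1) z := fun ι => by
    exact ((hP ι).differentiable (by simp) z.1).comp z differentiableAt_fst
  have hterm : ∀ ι : Fin k → Fin n, DifferentiableAt ℝ
      (fun w : Pt n => D ι w * ∏ a : Fin k, dqb (ι a) (g a) w.1) z :=
    fun ι => ((hD ι).differentiable (by simp) z).mul (hPz ι)
  unfold cochainOf
  rw [dp_sum i Finset.univ _ z (fun ι _ => hterm ι)]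
  refine Finset.sum_congr rfl fun ι _ => ?_
  rw [dp_mul i z ((hD ι).differentiable (by simp) z) (hPz ι),
    dp_comp_fst i z ((hP ι).differentiable (by simp) z.1)]
  ring

end Helpers

/-!
Statement 15: on `T*U = U × ℝⁿ`, the map `Ψ` sending the cochain
`Σ_ι D^ι ∂/∂q^ι ∈ C^k_{CE,der}(U,T*U)` to the vertical form `Σ_ι D^ι dp_ι` intertwines the
Chevalley–Eilenberg differential `δ` with the vertical de Rham differential:
`δ` applied to the realized cochain equals the realization of `d_ver` of the coefficients.
-/
theorem stmt_15 {n : ℕ} (k : ℕ) (U : Set (Fin n → ℝ)) (hU : IsOpen U)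
    (D : (Fin k → Fin n) → Pt n → ℝ) (hD : ∀ ι, ContDiff ℝ (⊤ : ℕ∞) (D ι))
    (f : Fin (k + 1) → (Fin n → ℝ) → ℝ) (hf : ∀ a, ContDiff ℝ (⊤ : ℕ∞) (f a))
    (z : Pt n) (hz : z.1 ∈ U) :
    ceD k (cochainOf k D) f z = cochainOf (k + 1) (dver k D) f z := by
  classical
  have hL : ceD k (cochainOf k D) f z
      = ∑ j : Fin (k + 1), ∑ i : Fin n, ∑ ι : Fin k → Fin n,
          (-1 : ℝ) ^ (j : ℕ) *
            (dqb i (f j) z.1 *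
              (dp i (D ι) z * ∏ a : Fin k, dqb (ι a) (f (j.succAbove a)) z.1)) := by
    unfold ceD canBr
    refine Finset.sum_congr rfl fun j _ => ?_
    rw [Finset.mul_sum]
    refine Finset.sum_congr rfl fun i _ => ?_
    rw [dq_comp_fst i z ((hf j).differentiable (by simp) z.1),
      dp_comp_fst i z ((hf j).differentiable (by simp) z.1),
      dp_cochain i D hD _ (fun a => hf _) z]
    simp only [zero_mul, sub_zero, Finset.mul_sum]
  have hR : cochainOf (k + 1) (dver k D) f z
      = ∑ j : Fin (k + 1), ∑ i : Fin n, ∑ ι : Fin k → Fin n,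
          (-1 : ℝ) ^ (j : ℕ) *
            (dqb i (f j) z.1 *
              (dp i (D ι) z * ∏ a : Fin k, dqb (ι a) (f (j.succAbove a)) z.1)) := by
    unfold cochainOf dver
    have step1 : (∑ ι : Fin (k+1) → Fin n, (∑ l : Fin (k+1),
            (-1 : ℝ) ^ (l : ℕ) * dp (ι l) (D fun m => ι (l.succAbove m)) z)
            * ∏ a : Fin (k+1), dqb (ι a) (f a) z.1)
        = ∑ l : Fin (k+1), ∑ ι : Fin (k+1) → Fin n,
            (-1 : ℝ) ^ (l : ℕ) * dp (ι l) (D fun m => ι (l.succAbove m)) z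
              * ∏ a : Fin (k+1), dqb (ι a) (f a) z.1 := by
      rw [Finset.sum_comm]
      exact Finset.sum_congr rfl fun ι _ => by rw [Finset.sum_mul]
    rw [step1]
    refine Finset.sum_congr rfl fun l _ => ?_
    rw [show (∑ ι : Fin (k+1) → Fin n,
            (-1 : ℝ) ^ (l : ℕ) * dp (ι l) (D fun m => ι (l.succAbove m)) z
              * ∏ a : Fin (k+1), dqb (ι a) (f a) z.1)
        = ∑ p : Fin n × (Fin k → Fin n),
            ((-1 : ℝ) ^ (l : ℕ) *
              dp (((Fin.insertNthEquiv (fun _ => Fin n) l) p) l)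
                (D fun m => ((Fin.insertNthEquiv (fun _ => Fin n) l) p) (l.succAbove m)) z
              * ∏ a : Fin (k+1),
                  dqb (((Fin.insertNthEquiv (fun _ => Fin n) l) p) a) (f a) z.1) from
      (Fintype.sum_equiv (Fin.insertNthEquiv (fun _ => Fin n) l) _ _ (fun p => rfl)).symm,
      Fintype.sum_prod_type]
    refine Finset.sum_congr rfl fun i _ => ?_
    refine Finset.sum_congr rfl fun ι _ => ?_
    simp only [Fin.insertNthEquiv, Equiv.coe_fn_mk]
    rw [Fin.prod_univ_succAbove (fun a => dqb (Fin.insertNth (α := fun _ => Fin n) l i ι a) (f a) z.1) l]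
    simp only [Fin.insertNth_apply_same, Fin.insertNth_apply_succAbove]
    ring
  rw [hL, hR]
end

section
/- Let M be a smooth manifold, π = Σ_{j≥0} λ^j π_j a formal Poisson structure on M with π₀ = 0, and B = Σ_{j≥0} λ^j B_j a formal series of closed 2-forms. Then id + B♭π♯ : Ω¹(M)[[λ]] → Ω¹(M)[[λ]] is invertible, and the formal bivector τ_B(π) determined by (τ_B(π))♯ = π♯ ∘ (id + B♭π♯)⁻¹ again satisfies [τ_B(π), τ_B(π)] = 0, i.e. is a formal Poisson structure. -/
open Finset

variable {E : Type*} [NormedAddCommGroup E] [NormedSpace ℝ E]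

/-- `π♯` of a formal bivector field `Pv = Σ λʲ Pvⱼ` applied to a formal 1-form
`α = Σ λʲ αⱼ` (Cauchy product in `λ`). -/
noncomputable def sharpF (Pv : ℕ → E → ((E →L[ℝ] ℝ) →L[ℝ] E))
    (α : ℕ → E → (E →L[ℝ] ℝ)) : ℕ → E → E :=
  fun n x => ∑ p ∈ antidiagonal n, Pv p.1 x (α p.2 x)

/-- `πᵢ(α, d(πⱼ(β,γ)))` for constant covectors `α β γ`, the building block of the
Schouten bracket `[πᵢ,πⱼ]` evaluated on `(α,β,γ)`. -/
noncomputable def jacTerm (Pvi Pvj : E → ((E →L[ℝ] ℝ) →L[ℝ] E)) (x : E)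
    (α β γ : E →L[ℝ] ℝ) : ℝ :=
  fderiv ℝ (fun y => γ (Pvj y β)) x (Pvi x α)

/-- The integrability condition `[Pv,Pv] = 0` for a formal bivector field, expressed
order by order in `λ` through the vanishing of the Jacobiator
`Σ_{i+j=n} (πᵢ(α, dπⱼ(β,γ)) + cyclic) = 0` on (constant) covectors. -/
def IsFormalPoisson (Pv : ℕ → E → ((E →L[ℝ] ℝ) →L[ℝ] E)) : Prop :=
  ∀ (n : ℕ) (x : E) (α β γ : E →L[ℝ] ℝ),
    ∑ p ∈ antidiagonal n,
      (jacTerm (Pv p.1) (Pv p.2) x α β γ + jacTerm (Pv p.1) (Pv p.2) x β γ α +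
        jacTerm (Pv p.1) (Pv p.2) x γ α β) = 0

/-- The operator `id + B♭π♯` on formal 1-forms. -/
noncomputable def gaugeOp (B : ℕ → E → (E →L[ℝ] E →L[ℝ] ℝ))
    (Pv : ℕ → E → ((E →L[ℝ] ℝ) →L[ℝ] E)) :
    (ℕ → E → (E →L[ℝ] ℝ)) → (ℕ → E → (E →L[ℝ] ℝ)) :=
  fun α n x => α n x + ∑ p ∈ antidiagonal n, B p.1 x (sharpF Pv α p.2 x)

/-- A formal series of closed 2-forms: `dBₙ(u,v,w) = Σ_cyc ∂_u Bₙ(v,w) = 0`. -/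
def ClosedForm (b : E → (E →L[ℝ] E →L[ℝ] ℝ)) : Prop :=
  ∀ (x : E) (u v w : E),
    fderiv ℝ (fun y => b y v w) x u + fderiv ℝ (fun y => b y w u) x v +
      fderiv ℝ (fun y => b y u v) x w = 0

/-!
Statement 17: let `π = Σ λʲ πⱼ` be a formal Poisson structure with `π₀ = 0` and
`B = Σ λʲ Bⱼ` a formal series of closed 2-forms.  Then `id + B♭π♯` is invertible on
`Ω¹(M)[[λ]]`, and the formal bivector `τ_B(π)` determined by
`(τ_B(π))♯ = π♯ ∘ (id + B♭π♯)⁻¹` is again a formal Poisson structure.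
-/

set_option maxHeartbeats 2000000

namespace S17
variable {M : Type*} [AddCommMonoid M]

def T2 (n : ℕ) (f : ℕ → ℕ → M) : M :=
  ∑ i ∈ range (n+1), ∑ j ∈ range (n+1), if i + j = n then f i j else 0

def T3 (n : ℕ) (f : ℕ → ℕ → ℕ → M) : M :=
  ∑ i ∈ range (n+1), ∑ j ∈ range (n+1), ∑ k ∈ range (n+1),
    if i + j + k = n then f i j k else 0

def T4 (n : ℕ) (f : ℕ → ℕ → ℕ → ℕ → M) : M :=
  ∑ i ∈ range (n+1), ∑ j ∈ range (n+1), ∑ k ∈ range (n+1), ∑ l ∈ range (n+1),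
    if i + j + k + l = n then f i j k l else 0

def T5 (n : ℕ) (f : ℕ → ℕ → ℕ → ℕ → ℕ → M) : M :=
  ∑ i ∈ range (n+1), ∑ j ∈ range (n+1), ∑ k ∈ range (n+1), ∑ l ∈ range (n+1),
    ∑ m ∈ range (n+1), if i + j + k + l + m = n then f i j k l m else 0

lemma sum_collapse {N m c : ℕ} (h : m ≤ N) (hc : c ≤ m) (g : ℕ → M) :
    (∑ j ∈ range (N+1), if c + j = m then g j else 0) = g (m - c) := by
  rw [Finset.sum_eq_single (m - c)]
  · rw [if_pos (by omega)]
  · intro b _ hb; rw [if_neg (by omega)]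
  · intro hmem; exact absurd (mem_range.mpr (by omega)) hmem

lemma sum_vanish {N m c : ℕ} (hc : m < c) (g : ℕ → M) :
    (∑ j ∈ range (N+1), if c + j = m then g j else 0) = 0 :=
  Finset.sum_eq_zero fun b _ => if_neg (by omega)

-- rotation helpers
lemma rot3 (s : Finset ℕ) (F : ℕ → ℕ → ℕ → M) :
    ∑ i ∈ s, ∑ j ∈ s, ∑ k ∈ s, F i j k = ∑ j ∈ s, ∑ k ∈ s, ∑ i ∈ s, F i j k := by
  rw [Finset.sum_comm]
  exact Finset.sum_congr rfl fun j _ => Finset.sum_comm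

lemma rot4 (s : Finset ℕ) (F : ℕ → ℕ → ℕ → ℕ → M) :
    ∑ i ∈ s, ∑ j ∈ s, ∑ k ∈ s, ∑ l ∈ s, F i j k l
      = ∑ j ∈ s, ∑ k ∈ s, ∑ l ∈ s, ∑ i ∈ s, F i j k l := by
  rw [Finset.sum_comm]
  exact Finset.sum_congr rfl fun j _ => rot3 s fun i k l => F i j k l

lemma rot5 (s : Finset ℕ) (F : ℕ → ℕ → ℕ → ℕ → ℕ → M) :
    ∑ i ∈ s, ∑ j ∈ s, ∑ k ∈ s, ∑ l ∈ s, ∑ m ∈ s, F i j k l m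
      = ∑ j ∈ s, ∑ k ∈ s, ∑ l ∈ s, ∑ m ∈ s, ∑ i ∈ s, F i j k l m := by
  rw [Finset.sum_comm]
  exact Finset.sum_congr rfl fun j _ => rot4 s fun i k l m => F i j k l m

-- permutations
lemma T2_swap (n : ℕ) (f : ℕ → ℕ → M) : T2 n f = T2 n fun i j => f j i := by
  unfold T2
  rw [Finset.sum_comm]
  exact Finset.sum_congr rfl fun i _ => Finset.sum_congr rfl fun j _ =>
    if_congr (by omega) rfl rfl

/-- `T3 n f = T3 n (fun i j k => f j k i)` -/
lemma T3_cyc (n : ℕ) (f : ℕ → ℕ → ℕ → M) : T3 n f = T3 n fun i j k => f j k i := by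
  unfold T3
  rw [rot3, rot3]
  refine Finset.sum_congr rfl fun i _ => Finset.sum_congr rfl fun j _ =>
    Finset.sum_congr rfl fun k _ => ?_
  beta_reduce
  exact if_congr (by omega) rfl rfl

lemma T3_cyc' (n : ℕ) (f : ℕ → ℕ → ℕ → M) : T3 n f = T3 n fun i j k => f k i j := by
  rw [T3_cyc, T3_cyc]

lemma T3_swap12 (n : ℕ) (f : ℕ → ℕ → ℕ → M) : T3 n f = T3 n fun i j k => f j i k := by
  unfold T3
  rw [Finset.sum_comm]
  exact Finset.sum_congr rfl fun i _ => Finset.sum_congr rfl fun j _ =>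
    Finset.sum_congr rfl fun k _ => if_congr (by omega) rfl rfl

lemma T3_swap23 (n : ℕ) (f : ℕ → ℕ → ℕ → M) : T3 n f = T3 n fun i j k => f i k j := by
  unfold T3
  refine Finset.sum_congr rfl fun i _ => ?_
  rw [Finset.sum_comm]
  exact Finset.sum_congr rfl fun j _ => Finset.sum_congr rfl fun k _ =>
    if_congr (by omega) rfl rfl

/-- `T4 n f = T4 n (fun i j k l => f j k l i)` -/
lemma T4_cyc (n : ℕ) (f : ℕ → ℕ → ℕ → ℕ → M) : T4 n f = T4 n fun i j k l => f j k l i := by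
  unfold T4
  rw [rot4, rot4, rot4]
  refine Finset.sum_congr rfl fun i _ => Finset.sum_congr rfl fun j _ =>
    Finset.sum_congr rfl fun k _ => Finset.sum_congr rfl fun l _ => ?_
  beta_reduce
  exact if_congr (by omega) rfl rfl

/-- `T5 n f = T5 n (fun i j k l m => f l m i j k)`. -/
lemma T5_rot2 (n : ℕ) (f : ℕ → ℕ → ℕ → ℕ → ℕ → M) :
    T5 n f = T5 n fun i j k l m => f l m i j k := by
  unfold T5
  rw [rot5, rot5]
  refine Finset.sum_congr rfl fun i _ => Finset.sum_congr rfl fun j _ =>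
    Finset.sum_congr rfl fun k _ => Finset.sum_congr rfl fun l _ =>
      Finset.sum_congr rfl fun m _ => ?_
  beta_reduce
  exact if_congr (by omega) rfl rfl

-- range extension
lemma T2_extend {N m : ℕ} (h : m ≤ N) (f : ℕ → ℕ → M) :
    (∑ i ∈ range (N+1), ∑ j ∈ range (N+1), if i + j = m then f i j else 0) = T2 m f := by
  unfold T2
  have hsub : range (m+1) ⊆ range (N+1) := by
    intro a ha; rw [mem_range] at *; omega
  rw [← Finset.sum_subset hsub (fun i _ hi => Finset.sum_eq_zero fun j _ =>
    if_neg (by rw [mem_range] at hi; omega))]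
  exact Finset.sum_congr rfl fun i hi =>
    (Finset.sum_subset hsub fun j _ hj =>
      if_neg (by rw [mem_range] at hi hj; omega)).symm

lemma T3_extend {N m : ℕ} (h : m ≤ N) (f : ℕ → ℕ → ℕ → M) :
    (∑ i ∈ range (N+1), ∑ j ∈ range (N+1), ∑ k ∈ range (N+1),
      if i + j + k = m then f i j k else 0) = T3 m f := by
  unfold T3
  have hsub : range (m+1) ⊆ range (N+1) := by
    intro a ha; rw [mem_range] at *; omega
  rw [← Finset.sum_subset hsub (fun i _ hi => Finset.sum_eq_zero fun j _ =>
    Finset.sum_eq_zero fun k _ => if_neg (by rw [mem_range] at hi; omega))]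
  refine Finset.sum_congr rfl fun i hi => ?_
  rw [← Finset.sum_subset hsub (fun j _ hj => Finset.sum_eq_zero fun k _ =>
    if_neg (by rw [mem_range] at hj hi; omega))]
  exact Finset.sum_congr rfl fun j hj =>
    (Finset.sum_subset hsub fun k _ hk =>
      if_neg (by rw [mem_range] at hi hj hk; omega)).symm

-- groupings
lemma T2T2_right (n : ℕ) (f : ℕ → ℕ → ℕ → M) :
    T2 n (fun i l => T2 l fun j k => f i j k) = T3 n f := by
  show (∑ i ∈ range (n+1), ∑ l ∈ range (n+1),
      if i + l = n then T2 l (fun j k => f i j k) else 0) = _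
  unfold T3
  refine Finset.sum_congr rfl fun i hi => ?_
  rw [mem_range] at hi
  rw [sum_collapse (le_refl n) (by omega)]
  rw [← T2_extend (N := n) (show n - i ≤ n by omega)]
  exact Finset.sum_congr rfl fun j _ => Finset.sum_congr rfl fun k _ =>
    if_congr (by omega) rfl rfl

lemma T2T2_left (n : ℕ) (f : ℕ → ℕ → ℕ → M) :
    T2 n (fun l k => T2 l fun i j => f i j k) = T3 n f := by
  rw [T2_swap]
  rw [T2T2_right n fun k i j => f i j k]
  exact (T3_cyc n f).symm

/-- group the pair `(j,k)` sitting in the last slot of a `T3`. -/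
lemma T3T2_last (n : ℕ) (f : ℕ → ℕ → ℕ → ℕ → M) :
    T3 n (fun i j m => T2 m fun p q => f i j p q) = T4 n f := by
  show (∑ i ∈ range (n+1), ∑ j ∈ range (n+1), ∑ m ∈ range (n+1),
      if i + j + m = n then T2 m (fun p q => f i j p q) else 0) = _
  unfold T4
  refine Finset.sum_congr rfl fun i hi => Finset.sum_congr rfl fun j hj => ?_
  rw [mem_range] at hi hj
  by_cases hij : i + j ≤ n
  · rw [show (fun m => if i + j + m = n then T2 m (fun p q => f i j p q) else 0)
        = fun m => if (i+j) + m = n then T2 m (fun p q => f i j p q) else 0 by rfl]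
    rw [sum_collapse (le_refl n) hij]
    rw [← T2_extend (N := n) (show n - (i+j) ≤ n by omega)]
    exact Finset.sum_congr rfl fun p _ => Finset.sum_congr rfl fun q _ =>
      if_congr (by omega) rfl rfl
  · rw [show (fun m => if i + j + m = n then T2 m (fun p q => f i j p q) else 0)
        = fun m => if (i+j) + m = n then T2 m (fun p q => f i j p q) else 0 by rfl]
    rw [sum_vanish (by omega)]
    exact (Finset.sum_eq_zero fun k _ => Finset.sum_eq_zero fun l _ =>
      if_neg (by omega)).symm

/-- group a triple sitting in the last slot of a `T2`. -/
lemma T2T3_last (n : ℕ) (f : ℕ → ℕ → ℕ → ℕ → M) :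
    T2 n (fun i m => T3 m fun a b c => f i a b c) = T4 n f := by
  show (∑ i ∈ range (n+1), ∑ m ∈ range (n+1),
      if i + m = n then T3 m (fun a b c => f i a b c) else 0) = _
  unfold T4
  refine Finset.sum_congr rfl fun i hi => ?_
  rw [mem_range] at hi
  rw [sum_collapse (le_refl n) (by omega)]
  rw [← T3_extend (N := n) (show n - i ≤ n by omega)]
  exact Finset.sum_congr rfl fun a _ => Finset.sum_congr rfl fun b _ =>
    Finset.sum_congr rfl fun c _ => if_congr (by omega) rfl rfl

/-- group a triple sitting in the last slot of a `T3` (5 indices total). -/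
lemma T3T3_last (n : ℕ) (f : ℕ → ℕ → ℕ → ℕ → ℕ → M) :
    T3 n (fun i j m => T3 m fun a b c => f i j a b c) = T5 n f := by
  show (∑ i ∈ range (n+1), ∑ j ∈ range (n+1), ∑ m ∈ range (n+1),
      if i + j + m = n then T3 m (fun a b c => f i j a b c) else 0) = _
  unfold T5
  refine Finset.sum_congr rfl fun i hi => Finset.sum_congr rfl fun j hj => ?_
  rw [mem_range] at hi hj
  by_cases hij : i + j ≤ n
  · rw [show (fun m => if i + j + m = n then T3 m (fun a b c => f i j a b c) else 0)
        = fun m => if (i+j) + m = n then T3 m (fun a b c => f i j a b c) else 0 by rfl]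
    rw [sum_collapse (le_refl n) hij]
    rw [← T3_extend (N := n) (show n - (i+j) ≤ n by omega)]
    exact Finset.sum_congr rfl fun a _ => Finset.sum_congr rfl fun b _ =>
      Finset.sum_congr rfl fun c _ => if_congr (by omega) rfl rfl
  · rw [show (fun m => if i + j + m = n then T3 m (fun a b c => f i j a b c) else 0)
        = fun m => if (i+j) + m = n then T3 m (fun a b c => f i j a b c) else 0 by rfl]
    rw [sum_vanish (by omega)]
    exact (Finset.sum_eq_zero fun a _ => Finset.sum_eq_zero fun b _ =>
      Finset.sum_eq_zero fun c _ => if_neg (by omega)).symm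

/-- group the pair `(p,q)` sitting in the last slot of a `T4` (5 indices total). -/
lemma T4T2_last (n : ℕ) (f : ℕ → ℕ → ℕ → ℕ → ℕ → M) :
    T4 n (fun i j k m => T2 m fun p q => f i j k p q) = T5 n f := by
  show (∑ i ∈ range (n+1), ∑ j ∈ range (n+1), ∑ k ∈ range (n+1), ∑ m ∈ range (n+1),
      if i + j + k + m = n then T2 m (fun p q => f i j k p q) else 0) = _
  unfold T5
  refine Finset.sum_congr rfl fun i hi => Finset.sum_congr rfl fun j hj =>
    Finset.sum_congr rfl fun k hk => ?_
  rw [mem_range] at hi hj hk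
  by_cases hijk : i + j + k ≤ n
  · rw [show (fun m => if i + j + k + m = n then T2 m (fun p q => f i j k p q) else 0)
        = fun m => if (i+j+k) + m = n then T2 m (fun p q => f i j k p q) else 0 by rfl]
    rw [sum_collapse (le_refl n) hijk]
    rw [← T2_extend (N := n) (show n - (i+j+k) ≤ n by omega)]
    exact Finset.sum_congr rfl fun p _ => Finset.sum_congr rfl fun q _ =>
      if_congr (by omega) rfl rfl
  · rw [show (fun m => if i + j + k + m = n then T2 m (fun p q => f i j k p q) else 0)
        = fun m => if (i+j+k) + m = n then T2 m (fun p q => f i j k p q) else 0 by rfl]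
    rw [sum_vanish (by omega)]
    exact (Finset.sum_eq_zero fun p _ => Finset.sum_eq_zero fun q _ =>
      if_neg (by omega)).symm

/-- inserting a Kronecker delta index in front. -/
lemma T3_delta1 (n : ℕ) (f : ℕ → ℕ → M) :
    T3 n (fun a i j => if a = 0 then f i j else 0) = T2 n f := by
  unfold T3 T2
  rw [Finset.sum_eq_single 0]
  · refine Finset.sum_congr rfl fun i _ => Finset.sum_congr rfl fun j _ => ?_
    beta_reduce
    by_cases h : i + j = n
    · rw [if_pos (by omega), if_pos h, if_pos rfl]
    · rw [if_neg (by omega), if_neg h]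
  · intro a _ ha
    refine Finset.sum_eq_zero fun i _ => Finset.sum_eq_zero fun j _ => ?_
    beta_reduce
    by_cases h : a + i + j = n
    · rw [if_pos h, if_neg ha]
    · rw [if_neg h]
  · intro h; exact absurd (mem_range.mpr (by omega)) h


-- congr lemmas
lemma T2_congr {n : ℕ} {f g : ℕ → ℕ → M} (h : ∀ i j, i + j = n → f i j = g i j) :
    T2 n f = T2 n g := by
  unfold T2
  refine Finset.sum_congr rfl fun i _ => Finset.sum_congr rfl fun j _ => ?_
  by_cases hij : i + j = n
  · rw [if_pos hij, if_pos hij, h i j hij]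
  · rw [if_neg hij, if_neg hij]

lemma T3_congr {n : ℕ} {f g : ℕ → ℕ → ℕ → M} (h : ∀ i j k, i + j + k = n → f i j k = g i j k) :
    T3 n f = T3 n g := by
  unfold T3
  refine Finset.sum_congr rfl fun i _ => Finset.sum_congr rfl fun j _ =>
    Finset.sum_congr rfl fun k _ => ?_
  by_cases hij : i + j + k = n
  · rw [if_pos hij, if_pos hij, h i j k hij]
  · rw [if_neg hij, if_neg hij]

lemma T4_congr {n : ℕ} {f g : ℕ → ℕ → ℕ → ℕ → M}
    (h : ∀ i j k l, i + j + k + l = n → f i j k l = g i j k l) :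
    T4 n f = T4 n g := by
  unfold T4
  refine Finset.sum_congr rfl fun i _ => Finset.sum_congr rfl fun j _ =>
    Finset.sum_congr rfl fun k _ => Finset.sum_congr rfl fun l _ => ?_
  by_cases hij : i + j + k + l = n
  · rw [if_pos hij, if_pos hij, h i j k l hij]
  · rw [if_neg hij, if_neg hij]

lemma T5_congr {n : ℕ} {f g : ℕ → ℕ → ℕ → ℕ → ℕ → M}
    (h : ∀ i j k l m, i + j + k + l + m = n → f i j k l m = g i j k l m) :
    T5 n f = T5 n g := by
  unfold T5
  refine Finset.sum_congr rfl fun i _ => Finset.sum_congr rfl fun j _ =>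
    Finset.sum_congr rfl fun k _ => Finset.sum_congr rfl fun l _ =>
    Finset.sum_congr rfl fun m _ => ?_
  by_cases hij : i + j + k + l + m = n
  · rw [if_pos hij, if_pos hij, h i j k l m hij]
  · rw [if_neg hij, if_neg hij]

lemma ad_eq_T2 (n : ℕ) (f : ℕ → ℕ → M) :
    ∑ p ∈ antidiagonal n, f p.1 p.2 = T2 n f := by
  rw [Finset.Nat.sum_antidiagonal_eq_sum_range_succ_mk]
  unfold T2
  refine Finset.sum_congr rfl fun i hi => ?_
  rw [mem_range] at hi
  exact (sum_collapse (le_refl n) (by omega) _).symm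

lemma T3_swap13 (n : ℕ) (f : ℕ → ℕ → ℕ → M) : T3 n f = T3 n fun i j k => f k j i := by
  unfold T3
  rw [rot3, Finset.sum_comm]
  refine Finset.sum_congr rfl fun i _ => Finset.sum_congr rfl fun j _ =>
    Finset.sum_congr rfl fun k _ => ?_
  beta_reduce
  exact if_congr (by omega) rfl rfl

private lemma ite_add_zero' {c : Prop} [Decidable c] (a b : M) :
    (if c then a + b else 0) = (if c then a else 0) + (if c then b else 0) := by
  split <;> simp

lemma T2_add (n : ℕ) (f g : ℕ → ℕ → M) :
    T2 n (fun i j => f i j + g i j) = T2 n f + T2 n g := by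
  unfold T2
  simp only [ite_add_zero', Finset.sum_add_distrib]

lemma T3_add (n : ℕ) (f g : ℕ → ℕ → ℕ → M) :
    T3 n (fun i j k => f i j k + g i j k) = T3 n f + T3 n g := by
  unfold T3
  simp only [ite_add_zero', Finset.sum_add_distrib]

lemma T4_add (n : ℕ) (f g : ℕ → ℕ → ℕ → ℕ → M) :
    T4 n (fun i j k l => f i j k l + g i j k l) = T4 n f + T4 n g := by
  unfold T4
  simp only [ite_add_zero', Finset.sum_add_distrib]

lemma T2_zero (n : ℕ) : T2 n (fun _ _ => (0 : M)) = 0 := by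
  unfold T2; simp

lemma T3_zero (n : ℕ) : T3 n (fun _ _ _ => (0 : M)) = 0 := by
  unfold T3; simp

section Group
variable {G : Type*} [AddCommGroup G]

lemma T2_neg (n : ℕ) (f : ℕ → ℕ → G) : T2 n (fun i j => - f i j) = - T2 n f := by
  unfold T2
  rw [← Finset.sum_neg_distrib]
  refine Finset.sum_congr rfl fun i _ => ?_
  rw [← Finset.sum_neg_distrib]
  refine Finset.sum_congr rfl fun j _ => ?_
  split <;> simp

lemma T3_neg (n : ℕ) (f : ℕ → ℕ → ℕ → G) : T3 n (fun i j k => - f i j k) = - T3 n f := by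
  unfold T3
  rw [← Finset.sum_neg_distrib]
  refine Finset.sum_congr rfl fun i _ => ?_
  rw [← Finset.sum_neg_distrib]
  refine Finset.sum_congr rfl fun j _ => ?_
  rw [← Finset.sum_neg_distrib]
  refine Finset.sum_congr rfl fun k _ => ?_
  split <;> simp

lemma T2_sub (n : ℕ) (f g : ℕ → ℕ → G) :
    T2 n (fun i j => f i j - g i j) = T2 n f - T2 n g := by
  simp only [sub_eq_add_neg, T2_add, T2_neg]

lemma T3_sub (n : ℕ) (f g : ℕ → ℕ → ℕ → G) :
    T3 n (fun i j k => f i j k - g i j k) = T3 n f - T3 n g := by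
  simp only [sub_eq_add_neg, T3_add, T3_neg]

end Group

section Push
variable {F G : Type*} [NormedAddCommGroup F] [NormedSpace ℝ F]
  [NormedAddCommGroup G] [NormedSpace ℝ G]

lemma T2_apply (n : ℕ) (f : ℕ → ℕ → F →L[ℝ] G) (v : F) :
    (T2 n f) v = T2 n fun i j => f i j v := by
  unfold T2
  simp only [ContinuousLinearMap.sum_apply,
    apply_ite (fun (g : F →L[ℝ] G) => g v), ContinuousLinearMap.zero_apply]

lemma T3_apply (n : ℕ) (f : ℕ → ℕ → ℕ → F →L[ℝ] G) (v : F) :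
    (T3 n f) v = T3 n fun i j k => f i j k v := by
  unfold T3
  simp only [ContinuousLinearMap.sum_apply,
    apply_ite (fun (g : F →L[ℝ] G) => g v), ContinuousLinearMap.zero_apply]

lemma map_T2 (A : F →L[ℝ] G) (n : ℕ) (f : ℕ → ℕ → F) :
    A (T2 n f) = T2 n fun i j => A (f i j) := by
  unfold T2
  simp only [map_sum, apply_ite A, map_zero]

lemma map_T3 (A : F →L[ℝ] G) (n : ℕ) (f : ℕ → ℕ → ℕ → F) :
    A (T3 n f) = T3 n fun i j k => A (f i j k) := by
  unfold T3
  simp only [map_sum, apply_ite A, map_zero]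

end Push

section More
variable {M : Type*} [AddCommMonoid M]

lemma T2_delta2 (n : ℕ) (f : ℕ → M) :
    T2 n (fun i j => if j = 0 then f i else 0) = f n := by
  unfold T2
  rw [Finset.sum_eq_single n]
  · rw [sum_collapse (le_refl n) (le_refl n)]
    simp
  · intro i _ hi
    refine Finset.sum_eq_zero fun j _ => ?_
    by_cases h : i + j = n
    · rw [if_pos h]
      beta_reduce
      rw [if_neg (show ¬ j = 0 by omega)]
    · rw [if_neg h]
  · intro h; exact absurd (mem_range.mpr (by omega)) h

lemma T4_zero (n : ℕ) : T4 n (fun _ _ _ _ => (0 : M)) = 0 := by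
  unfold T4; simp

lemma T5_zero (n : ℕ) : T5 n (fun _ _ _ _ _ => (0 : M)) = 0 := by
  unfold T5; simp

/-- heterogeneous rotation of 4 independent sums -/
lemma rot4h {s t u v : Finset ℕ} (F : ℕ → ℕ → ℕ → ℕ → M) :
    (∑ i ∈ s, ∑ j ∈ t, ∑ k ∈ u, ∑ l ∈ v, F i j k l)
      = ∑ j ∈ t, ∑ k ∈ u, ∑ l ∈ v, ∑ i ∈ s, F i j k l := by
  rw [Finset.sum_comm]
  refine Finset.sum_congr rfl fun j _ => ?_
  rw [Finset.sum_comm]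
  exact Finset.sum_congr rfl fun k _ => Finset.sum_comm

private lemma ite_sum_pull {P : Prop} [Decidable P] {s t : Finset ℕ} (f : ℕ → ℕ → M) :
    (if P then (∑ p ∈ s, ∑ q ∈ t, f p q) else 0)
      = ∑ p ∈ s, ∑ q ∈ t, (if P then f p q else 0) := by
  split
  · rfl
  · simp

lemma T2_T2_comm (a b : ℕ) (h : ℕ → ℕ → ℕ → ℕ → M) :
    T2 a (fun i j => T2 b fun p q => h i j p q)
      = T2 b (fun p q => T2 a fun i j => h i j p q) := by
  unfold T2
  simp only [ite_sum_pull]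
  rw [rot4h, rot4h]
  refine Finset.sum_congr rfl fun p _ => Finset.sum_congr rfl fun q _ =>
    Finset.sum_congr rfl fun i _ => Finset.sum_congr rfl fun j _ => ?_
  by_cases h1 : i + j = a <;> by_cases h2 : p + q = b <;> simp [h1, h2]

lemma T4_group22 (n : ℕ) (g : ℕ → ℕ → ℕ → ℕ → M) :
    T2 n (fun s t => T2 s (fun i j => T2 t fun p q => g i j p q)) = T4 n g := by
  rw [T2_swap]
  rw [T2T2_right n (fun t i j => T2 t fun p q => g i j p q)]
  have hcyc := T3_cyc n (fun i j t => T2 t fun p q => g i j p q)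
  beta_reduce at hcyc
  rw [← hcyc]
  exact T3T2_last n g

/-- T5 permutation: `f (q3, b, q2, d, q1)` reindexing (word: R5 R3 S R5 R3 R5). -/
lemma T5_perm0 (n : ℕ) (f : ℕ → ℕ → ℕ → ℕ → ℕ → M) :
    T5 n f = T5 n fun x1 x2 x3 x4 x5 => f x3 x5 x2 x4 x1 := by
  unfold T5
  rw [rot5, rot3, Finset.sum_comm, rot5, rot3, rot5]
  refine Finset.sum_congr rfl fun i _ => Finset.sum_congr rfl fun j _ =>
    Finset.sum_congr rfl fun k _ => Finset.sum_congr rfl fun l _ =>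
    Finset.sum_congr rfl fun m _ => ?_
  beta_reduce
  exact if_congr (by omega) rfl rfl

/-- T5 cyclic on the first three indices: value `f (x2, x3, x1, x4, x5)`. -/
lemma T5_cyc123 (n : ℕ) (f : ℕ → ℕ → ℕ → ℕ → ℕ → M) :
    T5 n f = T5 n fun x1 x2 x3 x4 x5 => f x2 x3 x1 x4 x5 := by
  unfold T5
  rw [rot3, rot3]
  refine Finset.sum_congr rfl fun i _ => Finset.sum_congr rfl fun j _ =>
    Finset.sum_congr rfl fun k _ => Finset.sum_congr rfl fun l _ =>
    Finset.sum_congr rfl fun m _ => ?_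
  beta_reduce
  exact if_congr (by omega) rfl rfl

/-- T4 permutation `(1 3 4)`: value `f (x3, x2, x4, x1)` (word: R4 S R4 S). -/
lemma T4_perm134 (n : ℕ) (f : ℕ → ℕ → ℕ → ℕ → M) :
    T4 n f = T4 n fun x1 x2 x3 x4 => f x3 x2 x4 x1 := by
  unfold T4
  rw [rot4, Finset.sum_comm, rot4, Finset.sum_comm]
  refine Finset.sum_congr rfl fun i _ => Finset.sum_congr rfl fun j _ =>
    Finset.sum_congr rfl fun k _ => Finset.sum_congr rfl fun l _ => ?_
  beta_reduce
  exact if_congr (by omega) rfl rfl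

/-- T4 permutation `(1 4 3)`: value `f (x4, x2, x1, x3)` (word: R4 S). -/
lemma T4_perm143 (n : ℕ) (f : ℕ → ℕ → ℕ → ℕ → M) :
    T4 n f = T4 n fun x1 x2 x3 x4 => f x4 x2 x1 x3 := by
  unfold T4
  rw [rot4, Finset.sum_comm]
  refine Finset.sum_congr rfl fun i _ => Finset.sum_congr rfl fun j _ =>
    Finset.sum_congr rfl fun k _ => Finset.sum_congr rfl fun l _ => ?_
  beta_reduce
  exact if_congr (by omega) rfl rfl

lemma T5_add' {G : Type*} [AddCommGroup G] (n : ℕ) (f g : ℕ → ℕ → ℕ → ℕ → ℕ → G) :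
    T5 n (fun a b c d e => f a b c d e + g a b c d e) = T5 n f + T5 n g := by
  unfold T5
  simp only [ite_add_zero', Finset.sum_add_distrib]

lemma T4_group31 (n : ℕ) (g : ℕ → ℕ → ℕ → ℕ → M) :
    T2 n (fun L d => T3 L (fun i a c => g i a c d)) = T4 n g := by
  rw [T2_swap]
  rw [T2T3_last n (fun d i a c => g i a c d)]
  exact (T4_cyc n g).symm

lemma T5_group32 (n : ℕ) (g : ℕ → ℕ → ℕ → ℕ → ℕ → M) :
    T2 n (fun L m => T3 L (fun a b c => T2 m (fun d e => g a b c d e))) = T5 n g := by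
  rw [T2_swap]
  rw [T2T3_last n (fun m a b c => T2 m (fun d e => g a b c d e))]
  have hc := T4_cyc n (fun a b c m => T2 m (fun d e => g a b c d e))
  beta_reduce at hc
  rw [← hc]
  exact T4T2_last n g

end More

section FD
variable {X F G H : Type*} [NormedAddCommGroup X] [NormedSpace ℝ X]
  [NormedAddCommGroup F] [NormedSpace ℝ F] [NormedAddCommGroup G] [NormedSpace ℝ G]
  [NormedAddCommGroup H] [NormedSpace ℝ H]

lemma fderiv_post {g : X → F} {x : X} (c : F →L[ℝ] G) (hg : DifferentiableAt ℝ g x) (u : X) :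
    fderiv ℝ (fun y => c (g y)) x u = c (fderiv ℝ g x u) := by
  rw [fderiv_clm_apply (differentiableAt_const c) hg]
  simp

lemma fderiv_apply_const {P : X → F →L[ℝ] G} {x : X} (hP : DifferentiableAt ℝ P x)
    (v : F) (u : X) :
    fderiv ℝ (fun y => P y v) x u = (fderiv ℝ P x u) v := by
  rw [fderiv_clm_apply hP (differentiableAt_const v)]
  simp

lemma fderiv_bilin {Q : X → F →L[ℝ] G →L[ℝ] H} {x : X} (hQ : DifferentiableAt ℝ Q x)
    (v : F) (w : G) (u : X) :
    fderiv ℝ (fun y => Q y v w) x u = (fderiv ℝ Q x u) v w := by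
  have h1 : DifferentiableAt ℝ (fun y => Q y v) x := hQ.clm_apply (differentiableAt_const v)
  calc fderiv ℝ (fun y => Q y v w) x u
      = (fderiv ℝ (fun z => Q z v) x u) w := fderiv_apply_const h1 w u
    _ = (fderiv ℝ Q x u) v w := by rw [fderiv_apply_const hQ v u]

end FD

section Geometry
variable {E : Type*} [NormedAddCommGroup E] [NormedSpace ℝ E]

noncomputable def tauS (Pv : ℕ → E → ((E →L[ℝ] ℝ) →L[ℝ] E))
    (B : ℕ → E → (E →L[ℝ] E →L[ℝ] ℝ)) : ℕ → E → ((E →L[ℝ] ℝ) →L[ℝ] E)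
  | n => fun x => Pv n x - ∑ k ∈ (range n).attach,
      ∑ i ∈ range (n+1), ∑ j ∈ range (n+1),
        if i + j + k.1 = n then (Pv i x).comp ((B j x).comp (tauS Pv B k.1 x)) else 0
  termination_by n => n
  decreasing_by exact mem_range.mp k.2

variable (Pv : ℕ → E → ((E →L[ℝ] ℝ) →L[ℝ] E)) (B : ℕ → E → (E →L[ℝ] E →L[ℝ] ℝ))

lemma tauS_contDiff (hsm : ∀ n, ContDiff ℝ (⊤ : ℕ∞) (Pv n)) (hBsm : ∀ n, ContDiff ℝ (⊤ : ℕ∞) (B n)) :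
    ∀ n, ContDiff ℝ (⊤ : ℕ∞) (tauS Pv B n) := by
  intro n
  induction n using Nat.strong_induction_on with
  | _ n ih =>
    rw [tauS]
    refine (hsm n).sub (ContDiff.sum fun k _ => ContDiff.sum fun i _ =>
      ContDiff.sum fun j _ => ?_)
    by_cases h : i + j + k.1 = n
    · simp only [if_pos h]
      exact (hsm i).clm_comp ((hBsm j).clm_comp (ih k.1 (mem_range.mp k.2)))
    · simp only [if_neg h]
      exact contDiff_const

variable (h0 : ∀ x : E, Pv 0 x = 0)
include h0

lemma tauS_eq (n : ℕ) (x : E) :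
    tauS Pv B n x = Pv n x -
      T3 n (fun i j k => (Pv i x).comp ((B j x).comp (tauS Pv B k x))) := by
  rw [tauS]
  beta_reduce
  congr 1
  rw [Finset.sum_attach (range n)
    (fun k => ∑ i ∈ range (n+1), ∑ j ∈ range (n+1),
      if i + j + k = n then (Pv i x).comp ((B j x).comp (tauS Pv B k x)) else 0)]
  unfold T3
  rw [rot3 (range (n+1)) (fun i j k =>
      if i + j + k = n then (Pv i x).comp ((B j x).comp (tauS Pv B k x)) else 0)]
  rw [rot3 (range (n+1)) (fun j k i =>
      if i + j + k = n then (Pv i x).comp ((B j x).comp (tauS Pv B k x)) else 0)]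
  -- now both sides sum over k outermost; ranges differ: `range n` vs `range (n+1)`
  refine Finset.sum_subset (by intro a ha; rw [mem_range] at *; omega) ?_
  intro k hk hk'
  have hkn : k = n := by rw [mem_range] at hk hk'; omega
  refine Finset.sum_eq_zero fun i _ => Finset.sum_eq_zero fun j _ => ?_
  by_cases h : i + j + k = n
  · have hi0 : i = 0 := by omega
    rw [if_pos h, hi0, h0 x, ContinuousLinearMap.zero_comp]
  · rw [if_neg h]

lemma tauS_apply (n : ℕ) (x : E) (μ : E →L[ℝ] ℝ) :
    tauS Pv B n x μ = Pv n x μ -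
      T3 n (fun i j k => Pv i x (B j x (tauS Pv B k x μ))) := by
  rw [tauS_eq Pv B h0, ContinuousLinearMap.sub_apply, T3_apply]
  rfl

lemma tauS_comm : ∀ (n : ℕ) (x : E) (μ : E →L[ℝ] ℝ),
    T3 n (fun i j k => Pv i x (B j x (tauS Pv B k x μ)))
      = T3 n (fun i j k => tauS Pv B i x (B j x (Pv k x μ))) := by
  intro n
  induction n using Nat.strong_induction_on with
  | _ n ih =>
    intro x μ
    -- expand tau on both sides
    have L1 : T3 n (fun i j k => Pv i x (B j x (tauS Pv B k x μ)))
        = T3 n (fun i j k => Pv i x (B j x (Pv k x μ)))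
          - T3 n (fun i j k =>
              T3 k (fun a b c => Pv i x (B j x (Pv a x (B b x (tauS Pv B c x μ)))))) := by
      rw [← T3_sub]
      refine T3_congr fun i j k hk => ?_
      rw [tauS_apply Pv B h0, map_sub, map_sub, map_T3 (B j x), map_T3 (Pv i x)]
    have R1 : T3 n (fun i j k => tauS Pv B i x (B j x (Pv k x μ)))
        = T3 n (fun i j k => Pv i x (B j x (Pv k x μ)))
          - T3 n (fun i j k =>
              T3 i (fun a b c => Pv a x (B b x (tauS Pv B c x (B j x (Pv k x μ)))))) := by
      rw [← T3_sub]
      refine T3_congr fun i j k hk => ?_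
      rw [tauS_apply Pv B h0]
    rw [L1, R1]
    congr 1
    -- use the induction hypothesis on the left inner block
    have L2 : T3 n (fun i j k =>
        T3 k (fun a b c => Pv i x (B j x (Pv a x (B b x (tauS Pv B c x μ))))))
        = T3 n (fun i j k =>
        T3 k (fun a b c => Pv i x (B j x (tauS Pv B a x (B b x (Pv c x μ)))))) := by
      refine T3_congr fun i j k hk => ?_
      by_cases hkn : k < n
      · rw [← map_T3 (Pv i x), ← map_T3 (B j x), ih k hkn x μ,
          map_T3 (B j x), map_T3 (Pv i x)]
      · have hi0 : i = 0 := by omega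
        rw [hi0, h0 x]
        simp
    rw [L2]
    rw [T3T3_last n (fun i j a b c => Pv i x (B j x (tauS Pv B a x (B b x (Pv c x μ)))))]
    rw [T3_cyc' n (fun i j k =>
      T3 i (fun a b c => Pv a x (B b x (tauS Pv B c x (B j x (Pv k x μ))))))]
    rw [T3T3_last n (fun i j a b c => Pv a x (B b x (tauS Pv B c x (B i x (Pv j x μ)))))]
    exact (T5_rot2 n (fun i j a b c =>
      Pv a x (B b x (tauS Pv B c x (B i x (Pv j x μ)))))).symm

lemma tauS_apply' (n : ℕ) (x : E) (μ : E →L[ℝ] ℝ) :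
    tauS Pv B n x μ = Pv n x μ -
      T3 n (fun i j k => tauS Pv B i x (B j x (Pv k x μ))) := by
  rw [tauS_apply Pv B h0, tauS_comm Pv B h0]

lemma tauS_anti (hanti : ∀ (n : ℕ) (x : E) (α β : E →L[ℝ] ℝ), α (Pv n x β) = - β (Pv n x α))
    (hBanti : ∀ (n : ℕ) (x : E) (u v : E), B n x u v = - B n x v u) :
    ∀ (n : ℕ) (x : E) (μ ν : E →L[ℝ] ℝ),
      μ (tauS Pv B n x ν) = - ν (tauS Pv B n x μ) := by
  intro n
  induction n using Nat.strong_induction_on with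
  | _ n ih =>
    intro x μ ν
    have key : T3 n (fun i j k => μ (Pv i x (B j x (tauS Pv B k x ν))))
        = T3 n (fun i j k => - ν (tauS Pv B k x (B j x (Pv i x μ)))) := by
      refine T3_congr fun i j k hk => ?_
      by_cases hkn : k < n
      · rw [hanti i x μ (B j x (tauS Pv B k x ν))]
        rw [hBanti j x (tauS Pv B k x ν) (Pv i x μ)]
        rw [neg_neg]
        rw [ih k hkn x (B j x (Pv i x μ)) ν]
      · have hi0 : i = 0 := by omega
        rw [hi0, h0 x]
        simp
    rw [tauS_apply Pv B h0, map_sub, map_T3 μ, key]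
    rw [tauS_apply' Pv B h0 n x μ, map_sub, map_T3 ν, neg_sub]
    rw [T3_neg]
    rw [hanti n x μ ν]
    rw [T3_swap13 n (fun i j k => ν (tauS Pv B k x (B j x (Pv i x μ))))]
    ring_nf

/-- the vector field `τ_m♯ c` for a constant covector `c`. -/
noncomputable def vF (c : E →L[ℝ] ℝ) (m : ℕ) (y : E) : E := tauS Pv B m y c

/-- the covector field `δ_{m0} c - (B♭ τ♯ c)_m`, i.e. `((id + B♭π♯)⁻¹ c)_m`. -/
noncomputable def cF (c : E →L[ℝ] ℝ) (m : ℕ) (y : E) : E →L[ℝ] ℝ :=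
  (if m = 0 then c else 0) - T2 m (fun a b => B a y (vF Pv B c b y))

omit h0 in
lemma cF_rel (c : E →L[ℝ] ℝ) (a : ℕ) (x : E) :
    (if a = 0 then c else 0) = cF Pv B c a x + T2 a (fun p q => B p x (vF Pv B c q x)) := by
  rw [cF, sub_add_cancel]

lemma vF_eq (c : E →L[ℝ] ℝ) (m : ℕ) (y : E) :
    vF Pv B c m y = T2 m (fun i j => Pv i y (cF Pv B c j y)) := by
  have expand : ∀ i j : ℕ, Pv i y (cF Pv B c j y)
      = (if j = 0 then Pv i y c else 0)
        - T2 j (fun a b => Pv i y (B a y (vF Pv B c b y))) := by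
    intro i j
    rw [cF, map_sub, map_T2 (Pv i y)]
    congr 1
    by_cases hj : j = 0
    · rw [if_pos hj, if_pos hj]
    · rw [if_neg hj, if_neg hj, map_zero]
  calc vF Pv B c m y
      = Pv m y c - T3 m (fun i j k => Pv i y (B j y (vF Pv B c k y))) := by
        rw [vF, tauS_apply Pv B h0]; rfl
    _ = T2 m (fun i j => Pv i y (cF Pv B c j y)) := by
        rw [show (T2 m fun i j => Pv i y (cF Pv B c j y))
            = T2 m (fun i j => (if j = 0 then Pv i y c else 0)
              - T2 j (fun a b => Pv i y (B a y (vF Pv B c b y)))) from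
          T2_congr fun i j _ => expand i j]
        rw [T2_sub, T2_delta2 m (fun i => Pv i y c)]
        rw [T2T2_right m (fun i a b => Pv i y (B a y (vF Pv B c b y)))]

omit h0 in
lemma vF_contDiff (hsm : ∀ n, ContDiff ℝ (⊤ : ℕ∞) (Pv n)) (hBsm : ∀ n, ContDiff ℝ (⊤ : ℕ∞) (B n))
    (c : E →L[ℝ] ℝ) (m : ℕ) : ContDiff ℝ (⊤ : ℕ∞) (vF Pv B c m) :=
  (tauS_contDiff Pv B hsm hBsm m).clm_apply contDiff_const

omit h0 in
lemma cF_contDiff (hsm : ∀ n, ContDiff ℝ (⊤ : ℕ∞) (Pv n)) (hBsm : ∀ n, ContDiff ℝ (⊤ : ℕ∞) (B n))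
    (c : E →L[ℝ] ℝ) (m : ℕ) : ContDiff ℝ (⊤ : ℕ∞) (cF Pv B c m) := by
  refine ContDiff.sub contDiff_const ?_
  show ContDiff ℝ (⊤ : ℕ∞) fun y => ∑ a ∈ range (m+1), ∑ b ∈ range (m+1),
    if a + b = m then B a y (vF Pv B c b y) else 0
  refine ContDiff.sum fun a _ => ContDiff.sum fun b _ => ?_
  by_cases h : a + b = m
  · simp only [if_pos h]
    exact (hBsm a).clm_apply (vF_contDiff Pv B hsm hBsm c b)
  · simp only [if_neg h]
    exact contDiff_const

omit h0 in
lemma vF_diffAt (hsm : ∀ n, ContDiff ℝ (⊤ : ℕ∞) (Pv n)) (hBsm : ∀ n, ContDiff ℝ (⊤ : ℕ∞) (B n))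
    (c : E →L[ℝ] ℝ) (m : ℕ) (x : E) : DifferentiableAt ℝ (vF Pv B c m) x :=
  ((vF_contDiff Pv B hsm hBsm c m).differentiable (by simp)).differentiableAt

omit h0 in
lemma cF_diffAt (hsm : ∀ n, ContDiff ℝ (⊤ : ℕ∞) (Pv n)) (hBsm : ∀ n, ContDiff ℝ (⊤ : ℕ∞) (B n))
    (c : E →L[ℝ] ℝ) (m : ℕ) (x : E) : DifferentiableAt ℝ (cF Pv B c m) x :=
  ((cF_contDiff Pv B hsm hBsm c m).differentiable (by simp)).differentiableAt

lemma fderiv_vF (hsm : ∀ n, ContDiff ℝ (⊤ : ℕ∞) (Pv n)) (hBsm : ∀ n, ContDiff ℝ (⊤ : ℕ∞) (B n))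
    (c : E →L[ℝ] ℝ) (m : ℕ) (x u : E) :
    fderiv ℝ (vF Pv B c m) x u
      = T2 m (fun i j => Pv i x (fderiv ℝ (cF Pv B c j) x u)
          + (fderiv ℝ (Pv i) x u) (cF Pv B c j x)) := by
  have hterm : ∀ i j : ℕ, DifferentiableAt ℝ (fun y => Pv i y (cF Pv B c j y)) x :=
    fun i j => (((hsm i).differentiable (by simp)).differentiableAt).clm_apply
      (cF_diffAt Pv B hsm hBsm c j x)
  have hite : ∀ i j : ℕ, DifferentiableAt ℝ
      (fun y => if i + j = m then Pv i y (cF Pv B c j y) else 0) x := by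
    intro i j
    by_cases h : i + j = m
    · simp only [if_pos h]; exact hterm i j
    · simp only [if_neg h]; exact differentiableAt_const 0
  have hfun : vF Pv B c m = fun y => ∑ i ∈ range (m+1), ∑ j ∈ range (m+1),
      if i + j = m then Pv i y (cF Pv B c j y) else 0 :=
    funext fun y => by rw [vF_eq Pv B h0]; rfl
  rw [hfun]
  rw [fderiv_fun_sum (fun i _ => DifferentiableAt.fun_sum fun j _ => hite i j)]
  rw [ContinuousLinearMap.sum_apply]
  show _ = ∑ i ∈ range (m+1), ∑ j ∈ range (m+1), if i + j = m then _ else 0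
  refine Finset.sum_congr rfl fun i _ => ?_
  rw [fderiv_fun_sum (fun j _ => hite i j), ContinuousLinearMap.sum_apply]
  refine Finset.sum_congr rfl fun j _ => ?_
  by_cases h : i + j = m
  · simp only [if_pos h]
    rw [fderiv_clm_apply (((hsm i).differentiable (by simp)).differentiableAt)
      (cF_diffAt Pv B hsm hBsm c j x)]
    simp [ContinuousLinearMap.add_apply, ContinuousLinearMap.comp_apply,
      ContinuousLinearMap.flip_apply]
  · simp only [if_neg h]
    simp

omit h0 in
lemma fderiv_cF (hsm : ∀ n, ContDiff ℝ (⊤ : ℕ∞) (Pv n)) (hBsm : ∀ n, ContDiff ℝ (⊤ : ℕ∞) (B n))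
    (c : E →L[ℝ] ℝ) (m : ℕ) (x u : E) :
    fderiv ℝ (cF Pv B c m) x u
      = - T2 m (fun a b => B a x (fderiv ℝ (vF Pv B c b) x u)
          + (fderiv ℝ (B a) x u) (vF Pv B c b x)) := by
  have hterm : ∀ a b : ℕ, DifferentiableAt ℝ (fun y => B a y (vF Pv B c b y)) x :=
    fun a b => (((hBsm a).differentiable (by simp)).differentiableAt).clm_apply
      (vF_diffAt Pv B hsm hBsm c b x)
  have hite : ∀ a b : ℕ, DifferentiableAt ℝ
      (fun y => if a + b = m then B a y (vF Pv B c b y) else 0) x := by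
    intro a b
    by_cases h : a + b = m
    · simp only [if_pos h]; exact hterm a b
    · simp only [if_neg h]; exact differentiableAt_const 0
  have hfun : cF Pv B c m = fun y => (if m = 0 then c else 0) -
      ∑ a ∈ range (m+1), ∑ b ∈ range (m+1),
        if a + b = m then B a y (vF Pv B c b y) else 0 := rfl
  rw [hfun]
  rw [fderiv_fun_sub (differentiableAt_const _)
    (DifferentiableAt.fun_sum fun a _ => DifferentiableAt.fun_sum fun b _ => hite a b)]
  rw [ContinuousLinearMap.sub_apply, fderiv_const_apply, ContinuousLinearMap.zero_apply,
    zero_sub, neg_inj]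
  rw [fderiv_fun_sum (fun a _ => DifferentiableAt.fun_sum fun b _ => hite a b),
    ContinuousLinearMap.sum_apply]
  show _ = ∑ a ∈ range (m+1), ∑ b ∈ range (m+1), if a + b = m then _ else 0
  refine Finset.sum_congr rfl fun a _ => ?_
  rw [fderiv_fun_sum (fun b _ => hite a b), ContinuousLinearMap.sum_apply]
  refine Finset.sum_congr rfl fun b _ => ?_
  by_cases h : a + b = m
  · simp only [if_pos h]
    rw [fderiv_clm_apply (((hBsm a).differentiable (by simp)).differentiableAt)
      (vF_diffAt Pv B hsm hBsm c b x)]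
    simp [ContinuousLinearMap.add_apply, ContinuousLinearMap.comp_apply,
      ContinuousLinearMap.flip_apply]
  · simp only [if_neg h]
    simp

lemma key (hsm : ∀ n, ContDiff ℝ (⊤ : ℕ∞) (Pv n)) (hBsm : ∀ n, ContDiff ℝ (⊤ : ℕ∞) (B n))
    (hanti : ∀ (n : ℕ) (x : E) (α β : E →L[ℝ] ℝ), α (Pv n x β) = - β (Pv n x α))
    (hBanti : ∀ (n : ℕ) (x : E) (u v : E), B n x u v = - B n x v u)
    (bb cc : E →L[ℝ] ℝ) (m : ℕ) (x u : E) :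
    fderiv ℝ (fun y => cc (vF Pv B bb m y)) x u
      = T3 m (fun a i j => cF Pv B cc a x ((fderiv ℝ (Pv i) x u) (cF Pv B bb j x)))
        + T3 m (fun a i j =>
            (fderiv ℝ (B a) x u) (vF Pv B bb i x) (vF Pv B cc j x)) := by
  have expand_cc : ∀ (a : ℕ) (v : E), (if a = 0 then cc v else 0)
      = cF Pv B cc a x v + T2 a (fun p q => B p x (vF Pv B cc q x) v) := by
    intro a v
    have h := cF_rel Pv B cc a x
    calc (if a = 0 then cc v else 0)
        = (if a = 0 then cc else (0 : E →L[ℝ] ℝ)) v := by split <;> simp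
      _ = (cF Pv B cc a x + T2 a fun p q => B p x (vF Pv B cc q x)) v := by rw [h]
      _ = _ := by rw [ContinuousLinearMap.add_apply, T2_apply]
  have step1 : fderiv ℝ (fun y => cc (vF Pv B bb m y)) x u
      = T2 m (fun i j => cc (Pv i x (fderiv ℝ (cF Pv B bb j) x u)))
        + T2 m (fun i j => cc ((fderiv ℝ (Pv i) x u) (cF Pv B bb j x))) := by
    rw [fderiv_post cc (vF_diffAt Pv B hsm hBsm bb m x) u]
    rw [fderiv_vF Pv B h0 hsm hBsm bb m x u]
    rw [map_T2 cc]
    rw [← T2_add]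
    exact T2_congr fun i j _ => map_add cc _ _
  have SA : T2 m (fun i j => cc ((fderiv ℝ (Pv i) x u) (cF Pv B bb j x)))
      = T3 m (fun a i j => cF Pv B cc a x ((fderiv ℝ (Pv i) x u) (cF Pv B bb j x)))
        + T3 m (fun a i j => T2 a (fun p q =>
            B p x (vF Pv B cc q x) ((fderiv ℝ (Pv i) x u) (cF Pv B bb j x)))) := by
    calc T2 m (fun i j => cc ((fderiv ℝ (Pv i) x u) (cF Pv B bb j x)))
        = T3 m (fun a i j => if a = 0 then cc ((fderiv ℝ (Pv i) x u) (cF Pv B bb j x)) else 0) :=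
          (T3_delta1 m _).symm
      _ = T3 m (fun a i j => cF Pv B cc a x ((fderiv ℝ (Pv i) x u) (cF Pv B bb j x))
            + T2 a (fun p q => B p x (vF Pv B cc q x) ((fderiv ℝ (Pv i) x u) (cF Pv B bb j x)))) :=
          T3_congr fun a i j _ => expand_cc a _
      _ = _ := T3_add m _ _
  have SB : T2 m (fun i j => cc (Pv i x (fderiv ℝ (cF Pv B bb j) x u)))
      = T3 m (fun a i j => cF Pv B cc a x (Pv i x (fderiv ℝ (cF Pv B bb j) x u)))
        + T3 m (fun a i j => T2 a (fun p q =>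
            B p x (vF Pv B cc q x) (Pv i x (fderiv ℝ (cF Pv B bb j) x u)))) := by
    calc T2 m (fun i j => cc (Pv i x (fderiv ℝ (cF Pv B bb j) x u)))
        = T3 m (fun a i j => if a = 0 then cc (Pv i x (fderiv ℝ (cF Pv B bb j) x u)) else 0) :=
          (T3_delta1 m _).symm
      _ = T3 m (fun a i j => cF Pv B cc a x (Pv i x (fderiv ℝ (cF Pv B bb j) x u))
            + T2 a (fun p q => B p x (vF Pv B cc q x) (Pv i x (fderiv ℝ (cF Pv B bb j) x u)))) :=
          T3_congr fun a i j _ => expand_cc a _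
      _ = _ := T3_add m _ _
  have SB1a : T3 m (fun a i j => cF Pv B cc a x (Pv i x (fderiv ℝ (cF Pv B bb j) x u)))
      = - T2 m (fun a l => (fderiv ℝ (cF Pv B bb a) x u) (vF Pv B cc l x)) := by
    calc T3 m (fun a i j => cF Pv B cc a x (Pv i x (fderiv ℝ (cF Pv B bb j) x u)))
        = T3 m (fun a i j => - (fderiv ℝ (cF Pv B bb j) x u) (Pv i x (cF Pv B cc a x))) :=
          T3_congr fun a i j _ => hanti i x (cF Pv B cc a x) (fderiv ℝ (cF Pv B bb j) x u)
      _ = - T3 m (fun a i j => (fderiv ℝ (cF Pv B bb j) x u) (Pv i x (cF Pv B cc a x))) :=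
          T3_neg m _
      _ = - T3 m (fun a i j => (fderiv ℝ (cF Pv B bb a) x u) (Pv i x (cF Pv B cc j x))) := by
          rw [T3_swap13 m (fun a i j => (fderiv ℝ (cF Pv B bb j) x u) (Pv i x (cF Pv B cc a x)))]
      _ = - T2 m (fun a l => T2 l (fun i j =>
            (fderiv ℝ (cF Pv B bb a) x u) (Pv i x (cF Pv B cc j x)))) := by
          rw [T2T2_right m (fun a i j => (fderiv ℝ (cF Pv B bb a) x u) (Pv i x (cF Pv B cc j x)))]
      _ = - T2 m (fun a l => (fderiv ℝ (cF Pv B bb a) x u) (vF Pv B cc l x)) := by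
          refine congrArg Neg.neg (T2_congr fun a l _ => ?_)
          rw [← map_T2 (fderiv ℝ (cF Pv B bb a) x u), ← vF_eq Pv B h0]
  have dEta : ∀ (a l : ℕ), (fderiv ℝ (cF Pv B bb a) x u) (vF Pv B cc l x)
      = - T2 a (fun p q => B p x (fderiv ℝ (vF Pv B bb q) x u) (vF Pv B cc l x)
          + (fderiv ℝ (B p) x u) (vF Pv B bb q x) (vF Pv B cc l x)) := by
    intro a l
    rw [fderiv_cF Pv B hsm hBsm bb a x u]
    rw [ContinuousLinearMap.neg_apply, T2_apply]
    exact congrArg Neg.neg (T2_congr fun p q _ => ContinuousLinearMap.add_apply _ _ _)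
  have SB1b : - T2 m (fun a l => (fderiv ℝ (cF Pv B bb a) x u) (vF Pv B cc l x))
      = T3 m (fun p q l => B p x (fderiv ℝ (vF Pv B bb q) x u) (vF Pv B cc l x))
        + T3 m (fun p q l => (fderiv ℝ (B p) x u) (vF Pv B bb q x) (vF Pv B cc l x)) := by
    calc - T2 m (fun a l => (fderiv ℝ (cF Pv B bb a) x u) (vF Pv B cc l x))
        = - T2 m (fun a l => - T2 a (fun p q =>
            B p x (fderiv ℝ (vF Pv B bb q) x u) (vF Pv B cc l x)
              + (fderiv ℝ (B p) x u) (vF Pv B bb q x) (vF Pv B cc l x))) :=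
          congrArg Neg.neg (T2_congr fun a l _ => dEta a l)
      _ = T2 m (fun a l => T2 a (fun p q =>
            B p x (fderiv ℝ (vF Pv B bb q) x u) (vF Pv B cc l x)
              + (fderiv ℝ (B p) x u) (vF Pv B bb q x) (vF Pv B cc l x))) := by
          rw [T2_neg, neg_neg]
      _ = T2 m (fun a l => T2 a (fun p q =>
            B p x (fderiv ℝ (vF Pv B bb q) x u) (vF Pv B cc l x))
          + T2 a (fun p q =>
            (fderiv ℝ (B p) x u) (vF Pv B bb q x) (vF Pv B cc l x))) :=
          T2_congr fun a l _ => T2_add a _ _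
      _ = T2 m (fun a l => T2 a (fun p q =>
            B p x (fderiv ℝ (vF Pv B bb q) x u) (vF Pv B cc l x)))
          + T2 m (fun a l => T2 a (fun p q =>
            (fderiv ℝ (B p) x u) (vF Pv B bb q x) (vF Pv B cc l x))) := T2_add m _ _
      _ = _ := by
          rw [T2T2_left m (fun p q l => B p x (fderiv ℝ (vF Pv B bb q) x u) (vF Pv B cc l x))]
          rw [T2T2_left m (fun p q l =>
            (fderiv ℝ (B p) x u) (vF Pv B bb q x) (vF Pv B cc l x))]
  have PAB : T3 m (fun a i j => T2 a (fun p q =>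
          B p x (vF Pv B cc q x) ((fderiv ℝ (Pv i) x u) (cF Pv B bb j x))))
      + T3 m (fun a i j => T2 a (fun p q =>
          B p x (vF Pv B cc q x) (Pv i x (fderiv ℝ (cF Pv B bb j) x u))))
      = - T3 m (fun p q l =>
          B p x (fderiv ℝ (vF Pv B bb q) x u) (vF Pv B cc l x)) := by
    rw [← T3_add]
    have comb : T3 m (fun a i j => T2 a (fun p q =>
          B p x (vF Pv B cc q x) ((fderiv ℝ (Pv i) x u) (cF Pv B bb j x)))
        + T2 a (fun p q =>
          B p x (vF Pv B cc q x) (Pv i x (fderiv ℝ (cF Pv B bb j) x u))))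
        = T3 m (fun i j a => T2 a (fun p q => B p x (vF Pv B cc q x)
            (Pv i x (fderiv ℝ (cF Pv B bb j) x u)
              + (fderiv ℝ (Pv i) x u) (cF Pv B bb j x)))) := by
      have hc := T3_cyc m (fun i j a => T2 a (fun p q => B p x (vF Pv B cc q x)
          (Pv i x (fderiv ℝ (cF Pv B bb j) x u)
            + (fderiv ℝ (Pv i) x u) (cF Pv B bb j x))))
      beta_reduce at hc
      refine Eq.trans (T3_congr fun a i j _ => ?_) hc.symm
      rw [← T2_add]
      refine T2_congr fun p q _ => ?_
      rw [← map_add]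
      rw [add_comm ((fderiv ℝ (Pv i) x u) (cF Pv B bb j x))]
    rw [comb]
    rw [T3T2_last m (fun i j p q => B p x (vF Pv B cc q x)
        (Pv i x (fderiv ℝ (cF Pv B bb j) x u) + (fderiv ℝ (Pv i) x u) (cF Pv B bb j x)))]
    rw [← T4_group22 m (fun i j p q => B p x (vF Pv B cc q x)
        (Pv i x (fderiv ℝ (cF Pv B bb j) x u) + (fderiv ℝ (Pv i) x u) (cF Pv B bb j x)))]
    have inner : ∀ s t : ℕ, T2 s (fun i j => T2 t (fun p q => B p x (vF Pv B cc q x)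
        (Pv i x (fderiv ℝ (cF Pv B bb j) x u) + (fderiv ℝ (Pv i) x u) (cF Pv B bb j x))))
        = T2 t (fun p q => B p x (vF Pv B cc q x) (fderiv ℝ (vF Pv B bb s) x u)) := by
      intro s t
      rw [T2_T2_comm s t]
      refine T2_congr fun p q _ => ?_
      rw [← map_T2 (B p x (vF Pv B cc q x))]
      rw [← fderiv_vF Pv B h0 hsm hBsm bb s x u]
    calc T2 m (fun s t => T2 s (fun i j => T2 t (fun p q => B p x (vF Pv B cc q x)
          (Pv i x (fderiv ℝ (cF Pv B bb j) x u) + (fderiv ℝ (Pv i) x u) (cF Pv B bb j x)))))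
        = T2 m (fun s t => T2 t (fun p q =>
            B p x (vF Pv B cc q x) (fderiv ℝ (vF Pv B bb s) x u))) :=
          T2_congr fun s t _ => inner s t
      _ = T3 m (fun s p q => B p x (vF Pv B cc q x) (fderiv ℝ (vF Pv B bb s) x u)) :=
          T2T2_right m _
      _ = T3 m (fun s p q => - B p x (fderiv ℝ (vF Pv B bb s) x u) (vF Pv B cc q x)) :=
          T3_congr fun s p q _ =>
            hBanti p x (vF Pv B cc q x) (fderiv ℝ (vF Pv B bb s) x u)
      _ = - T3 m (fun s p q => B p x (fderiv ℝ (vF Pv B bb s) x u) (vF Pv B cc q x)) :=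
          T3_neg m _
      _ = _ := by
          rw [T3_swap12 m (fun s p q =>
            B p x (fderiv ℝ (vF Pv B bb s) x u) (vF Pv B cc q x))]
  linarith [step1, SA, SB, SB1a, SB1b, PAB]

lemma tau_form_B (n : ℕ) (x : E) (μ : E →L[ℝ] ℝ) :
    tauS Pv B n x μ + T3 n (fun i j k => tauS Pv B i x (B j x (Pv k x μ))) = Pv n x μ := by
  rw [tauS_apply' Pv B h0]
  exact sub_add_cancel _ _

lemma sharp_gauge (α : ℕ → E → (E →L[ℝ] ℝ)) (n : ℕ) (x : E) :
    sharpF (tauS Pv B) (gaugeOp B Pv α) n x = sharpF Pv α n x := by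
  have hterm : ∀ i j : ℕ, tauS Pv B i x ((gaugeOp B Pv α) j x)
      = tauS Pv B i x (α j x)
        + T2 j (fun a b => T2 b (fun c d => tauS Pv B i x (B a x (Pv c x (α d x))))) := by
    intro i j
    show tauS Pv B i x (α j x + ∑ p ∈ antidiagonal j, B p.1 x (sharpF Pv α p.2 x)) = _
    rw [map_add]
    congr 1
    calc tauS Pv B i x (∑ p ∈ antidiagonal j, B p.1 x (sharpF Pv α p.2 x))
        = tauS Pv B i x (T2 j (fun a b => B a x (sharpF Pv α b x))) := by
          rw [ad_eq_T2 j (fun a b => B a x (sharpF Pv α b x))]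
      _ = T2 j (fun a b => tauS Pv B i x (B a x (sharpF Pv α b x))) :=
          map_T2 (tauS Pv B i x) j _
      _ = _ := by
          refine T2_congr fun a b _ => ?_
          have hsf : sharpF Pv α b x = T2 b (fun c d => Pv c x (α d x)) :=
            ad_eq_T2 b (fun c d => Pv c x (α d x))
          rw [hsf, map_T2 (B a x), map_T2 (tauS Pv B i x)]
  calc sharpF (tauS Pv B) (gaugeOp B Pv α) n x
      = T2 n (fun i j => tauS Pv B i x ((gaugeOp B Pv α) j x)) :=
        ad_eq_T2 n (fun i j => tauS Pv B i x ((gaugeOp B Pv α) j x))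
    _ = T2 n (fun i j => tauS Pv B i x (α j x))
        + T2 n (fun i j => T2 j (fun a b =>
            T2 b (fun c d => tauS Pv B i x (B a x (Pv c x (α d x)))))) := by
        rw [← T2_add]
        exact T2_congr fun i j _ => hterm i j
    _ = T2 n (fun i j => tauS Pv B i x (α j x))
        + T2 n (fun L d => T3 L (fun i a c => tauS Pv B i x (B a x (Pv c x (α d x))))) := by
        congr 1
        rw [T2T2_right n (fun i a b => T2 b (fun c d => tauS Pv B i x (B a x (Pv c x (α d x)))))]
        rw [T3T2_last n (fun i a c d => tauS Pv B i x (B a x (Pv c x (α d x))))]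
        rw [T4_group31 n (fun i a c d => tauS Pv B i x (B a x (Pv c x (α d x))))]
    _ = T2 n (fun L d => Pv L x (α d x)) := by
        rw [← T2_add]
        exact T2_congr fun L d _ => tau_form_B Pv B h0 L x (α d x)
    _ = sharpF Pv α n x := (ad_eq_T2 n (fun i j => Pv i x (α j x))).symm

/-- inverse of the gauge operator. -/
noncomputable def gInv (β : ℕ → E → (E →L[ℝ] ℝ)) : ℕ → E → (E →L[ℝ] ℝ) :=
  fun n x => β n x - ∑ p ∈ antidiagonal n, B p.1 x (sharpF (tauS Pv B) β p.2 x)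

lemma sharp_gInv (β : ℕ → E → (E →L[ℝ] ℝ)) (n : ℕ) (x : E) :
    sharpF Pv (gInv Pv B β) n x = sharpF (tauS Pv B) β n x := by
  have hterm : ∀ i j : ℕ, Pv i x ((gInv Pv B β) j x)
      = Pv i x (β j x)
        - T2 j (fun a b => T2 b (fun c d => Pv i x (B a x (tauS Pv B c x (β d x))))) := by
    intro i j
    show Pv i x (β j x - ∑ p ∈ antidiagonal j, B p.1 x (sharpF (tauS Pv B) β p.2 x)) = _
    rw [map_sub]
    congr 1
    calc Pv i x (∑ p ∈ antidiagonal j, B p.1 x (sharpF (tauS Pv B) β p.2 x))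
        = Pv i x (T2 j (fun a b => B a x (sharpF (tauS Pv B) β b x))) := by
          rw [ad_eq_T2 j (fun a b => B a x (sharpF (tauS Pv B) β b x))]
      _ = T2 j (fun a b => Pv i x (B a x (sharpF (tauS Pv B) β b x))) :=
          map_T2 (Pv i x) j _
      _ = _ := by
          refine T2_congr fun a b _ => ?_
          have hsf : sharpF (tauS Pv B) β b x = T2 b (fun c d => tauS Pv B c x (β d x)) :=
            ad_eq_T2 b (fun c d => tauS Pv B c x (β d x))
          rw [hsf, map_T2 (B a x), map_T2 (Pv i x)]
  calc sharpF Pv (gInv Pv B β) n x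
      = T2 n (fun i j => Pv i x ((gInv Pv B β) j x)) :=
        ad_eq_T2 n (fun i j => Pv i x ((gInv Pv B β) j x))
    _ = T2 n (fun i j => Pv i x (β j x))
        - T2 n (fun i j => T2 j (fun a b =>
            T2 b (fun c d => Pv i x (B a x (tauS Pv B c x (β d x)))))) := by
        rw [← T2_sub]
        exact T2_congr fun i j _ => hterm i j
    _ = T2 n (fun i j => Pv i x (β j x))
        - T2 n (fun L d => T3 L (fun i a c => Pv i x (B a x (tauS Pv B c x (β d x))))) := by
        congr 1
        rw [T2T2_right n (fun i a b => T2 b (fun c d => Pv i x (B a x (tauS Pv B c x (β d x)))))]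
        rw [T3T2_last n (fun i a c d => Pv i x (B a x (tauS Pv B c x (β d x))))]
        rw [T4_group31 n (fun i a c d => Pv i x (B a x (tauS Pv B c x (β d x))))]
    _ = T2 n (fun L d => tauS Pv B L x (β d x)) := by
        rw [← T2_sub]
        exact T2_congr fun L d _ => (tauS_apply Pv B h0 L x (β d x)).symm
    _ = sharpF (tauS Pv B) β n x :=
        (ad_eq_T2 n (fun i j => tauS Pv B i x (β j x))).symm

lemma gauge_left_inv (α : ℕ → E → (E →L[ℝ] ℝ)) :
    gInv Pv B (gaugeOp B Pv α) = α := by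
  funext n x
  show gaugeOp B Pv α n x
      - ∑ p ∈ antidiagonal n, B p.1 x (sharpF (tauS Pv B) (gaugeOp B Pv α) p.2 x) = α n x
  have h1 : ∀ p : ℕ × ℕ, p ∈ antidiagonal n →
      B p.1 x (sharpF (tauS Pv B) (gaugeOp B Pv α) p.2 x)
        = B p.1 x (sharpF Pv α p.2 x) := fun p _ => by
    rw [sharp_gauge Pv B h0 α p.2 x]
  rw [Finset.sum_congr rfl h1]
  show α n x + ∑ p ∈ antidiagonal n, B p.1 x (sharpF Pv α p.2 x)
      - ∑ p ∈ antidiagonal n, B p.1 x (sharpF Pv α p.2 x) = α n x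
  exact add_sub_cancel_right _ _

lemma gauge_right_inv (β : ℕ → E → (E →L[ℝ] ℝ)) :
    gaugeOp B Pv (gInv Pv B β) = β := by
  funext n x
  show gInv Pv B β n x + ∑ p ∈ antidiagonal n, B p.1 x (sharpF Pv (gInv Pv B β) p.2 x) = β n x
  have h1 : ∀ p : ℕ × ℕ, p ∈ antidiagonal n →
      B p.1 x (sharpF Pv (gInv Pv B β) p.2 x)
        = B p.1 x (sharpF (tauS Pv B) β p.2 x) := fun p _ => by
    rw [sharp_gInv Pv B h0 β p.2 x]
  rw [Finset.sum_congr rfl h1]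
  show β n x - ∑ p ∈ antidiagonal n, B p.1 x (sharpF (tauS Pv B) β p.2 x)
      + ∑ p ∈ antidiagonal n, B p.1 x (sharpF (tauS Pv B) β p.2 x) = β n x
  exact sub_add_cancel _ _

omit h0 in
lemma jac_bridge (P Q : E → ((E →L[ℝ] ℝ) →L[ℝ] E)) (x : E) (hQ : DifferentiableAt ℝ Q x)
    (a b c : E →L[ℝ] ℝ) : jacTerm P Q x a b c = c ((fderiv ℝ Q x (P x a)) b) := by
  have hg : DifferentiableAt ℝ (fun y => Q y b) x := hQ.clm_apply (differentiableAt_const b)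
  calc jacTerm P Q x a b c
      = fderiv ℝ (fun y => c (Q y b)) x (P x a) := rfl
    _ = c (fderiv ℝ (fun y => Q y b) x (P x a)) := fderiv_post c hg (P x a)
    _ = c ((fderiv ℝ Q x (P x a)) b) := by rw [fderiv_apply_const hQ b (P x a)]

lemma tau_poisson (hsm : ∀ n, ContDiff ℝ (⊤ : ℕ∞) (Pv n)) (hBsm : ∀ n, ContDiff ℝ (⊤ : ℕ∞) (B n))
    (hanti : ∀ (n : ℕ) (x : E) (α β : E →L[ℝ] ℝ), α (Pv n x β) = - β (Pv n x α))
    (hBanti : ∀ (n : ℕ) (x : E) (u v : E), B n x u v = - B n x v u)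
    (hP : IsFormalPoisson Pv) (hBcl : ∀ n, ClosedForm (B n)) :
    IsFormalPoisson (tauS Pv B) := by
  intro n x α β γ
  have hB3 : ∀ (a : ℕ) (u v w : E),
      (fderiv ℝ (B a) x u) v w + (fderiv ℝ (B a) x v) w u + (fderiv ℝ (B a) x w) u v = 0 := by
    intro a u v w
    have hd : DifferentiableAt ℝ (B a) x := ((hBsm a).differentiable (by simp)).differentiableAt
    have h := hBcl a x u v w
    rw [fderiv_bilin hd v w u, fderiv_bilin hd w u v, fderiv_bilin hd u v w] at h
    exact h
  -- rewrite each jacTerm through the key lemma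
  have jkey : ∀ (aa bb cc : E →L[ℝ] ℝ) (i j : ℕ),
      jacTerm (tauS Pv B i) (tauS Pv B j) x aa bb cc
        = T3 j (fun a b c => cF Pv B cc a x ((fderiv ℝ (Pv b) x (vF Pv B aa i x)) (cF Pv B bb c x)))
          + T3 j (fun a b c =>
              (fderiv ℝ (B a) x (vF Pv B aa i x)) (vF Pv B bb b x) (vF Pv B cc c x)) := by
    intro aa bb cc i j
    have : jacTerm (tauS Pv B i) (tauS Pv B j) x aa bb cc
        = fderiv ℝ (fun y => cc (vF Pv B bb j y)) x (vF Pv B aa i x) := rfl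
    rw [this, key Pv B h0 hsm hBsm hanti hBanti bb cc j x (vF Pv B aa i x)]
  -- the six partial sums
  have D2 : T2 n (fun i j => T3 j (fun a b c =>
        (fderiv ℝ (B a) x (vF Pv B α i x)) (vF Pv B β b x) (vF Pv B γ c x)))
      + T2 n (fun i j => T3 j (fun a b c =>
        (fderiv ℝ (B a) x (vF Pv B β i x)) (vF Pv B γ b x) (vF Pv B α c x)))
      + T2 n (fun i j => T3 j (fun a b c =>
        (fderiv ℝ (B a) x (vF Pv B γ i x)) (vF Pv B α b x) (vF Pv B β c x))) = 0 := by
    rw [T2T3_last n (fun i a b c =>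
      (fderiv ℝ (B a) x (vF Pv B α i x)) (vF Pv B β b x) (vF Pv B γ c x))]
    rw [T2T3_last n (fun i a b c =>
      (fderiv ℝ (B a) x (vF Pv B β i x)) (vF Pv B γ b x) (vF Pv B α c x))]
    rw [T2T3_last n (fun i a b c =>
      (fderiv ℝ (B a) x (vF Pv B γ i x)) (vF Pv B α b x) (vF Pv B β c x))]
    rw [T4_perm134 n (fun i a b c =>
      (fderiv ℝ (B a) x (vF Pv B β i x)) (vF Pv B γ b x) (vF Pv B α c x))]
    rw [T4_perm143 n (fun i a b c =>
      (fderiv ℝ (B a) x (vF Pv B γ i x)) (vF Pv B α b x) (vF Pv B β c x))]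
    rw [← T4_add, ← T4_add]
    calc T4 n _ = T4 n (fun _ _ _ _ => (0:ℝ)) := by
          refine T4_congr fun i a b c _ => ?_
          beta_reduce
          exact hB3 a (vF Pv B α i x) (vF Pv B β b x) (vF Pv B γ c x)
      _ = 0 := T4_zero n
  have conv1 : ∀ (aa bb cc : E →L[ℝ] ℝ),
      T2 n (fun i j => T3 j (fun a b c =>
          cF Pv B cc a x ((fderiv ℝ (Pv b) x (vF Pv B aa i x)) (cF Pv B bb c x))))
        = T5 n (fun q1 q2 q3 d b =>
            jacTerm (Pv d) (Pv b) x (cF Pv B aa q1 x) (cF Pv B bb q2 x) (cF Pv B cc q3 x)) := by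
    intro aa bb cc
    calc T2 n (fun i j => T3 j (fun a b c =>
          cF Pv B cc a x ((fderiv ℝ (Pv b) x (vF Pv B aa i x)) (cF Pv B bb c x))))
        = T2 n (fun i j => T3 j (fun a b c => T2 i (fun d e =>
            cF Pv B cc a x ((fderiv ℝ (Pv b) x (Pv d x (cF Pv B aa e x))) (cF Pv B bb c x))))) := by
          refine T2_congr fun i j _ => T3_congr fun a b c _ => ?_
          rw [vF_eq Pv B h0 aa i x, map_T2 (fderiv ℝ (Pv b) x), T2_apply,
            map_T2 (cF Pv B cc a x)]
      _ = T4 n (fun i a b c => T2 i (fun d e =>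
            cF Pv B cc a x ((fderiv ℝ (Pv b) x (Pv d x (cF Pv B aa e x))) (cF Pv B bb c x)))) :=
          T2T3_last n _
      _ = T4 n (fun a b c i => T2 i (fun d e =>
            cF Pv B cc a x ((fderiv ℝ (Pv b) x (Pv d x (cF Pv B aa e x))) (cF Pv B bb c x)))) := by
          have hc := T4_cyc n (fun a b c i => T2 i (fun d e =>
            cF Pv B cc a x ((fderiv ℝ (Pv b) x (Pv d x (cF Pv B aa e x))) (cF Pv B bb c x))))
          beta_reduce at hc
          rw [← hc]
      _ = T5 n (fun a b c d e =>
            cF Pv B cc a x ((fderiv ℝ (Pv b) x (Pv d x (cF Pv B aa e x))) (cF Pv B bb c x))) :=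
          T4T2_last n _
      _ = T5 n (fun a b c d e =>
            jacTerm (Pv d) (Pv b) x (cF Pv B aa e x) (cF Pv B bb c x) (cF Pv B cc a x)) := by
          refine T5_congr fun a b c d e _ => ?_
          rw [jac_bridge (Pv d) (Pv b) x (((hsm b).differentiable (by simp)).differentiableAt)
            (cF Pv B aa e x) (cF Pv B bb c x) (cF Pv B cc a x)]
      _ = _ := by
          rw [T5_perm0 n (fun a b c d e =>
            jacTerm (Pv d) (Pv b) x (cF Pv B aa e x) (cF Pv B bb c x) (cF Pv B cc a x))]
  have D1 : T2 n (fun i j => T3 j (fun a b c =>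
        cF Pv B γ a x ((fderiv ℝ (Pv b) x (vF Pv B α i x)) (cF Pv B β c x))))
      + T2 n (fun i j => T3 j (fun a b c =>
        cF Pv B α a x ((fderiv ℝ (Pv b) x (vF Pv B β i x)) (cF Pv B γ c x))))
      + T2 n (fun i j => T3 j (fun a b c =>
        cF Pv B β a x ((fderiv ℝ (Pv b) x (vF Pv B γ i x)) (cF Pv B α c x)))) = 0 := by
    rw [conv1 α β γ, conv1 β γ α, conv1 γ α β]
    rw [T5_cyc123 n (fun q1 q2 q3 d b =>
      jacTerm (Pv d) (Pv b) x (cF Pv B β q1 x) (cF Pv B γ q2 x) (cF Pv B α q3 x))]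
    rw [T5_cyc123 n (fun q1 q2 q3 d b =>
      jacTerm (Pv d) (Pv b) x (cF Pv B γ q1 x) (cF Pv B α q2 x) (cF Pv B β q3 x))]
    rw [T5_cyc123 n (fun x1 x2 x3 x4 x5 =>
      jacTerm (Pv x4) (Pv x5) x (cF Pv B γ x2 x) (cF Pv B α x3 x) (cF Pv B β x1 x))]
    rw [← T5_add', ← T5_add']
    have hz : T5 n (fun q1 q2 q3 d b =>
        jacTerm (Pv d) (Pv b) x (cF Pv B α q1 x) (cF Pv B β q2 x) (cF Pv B γ q3 x)
          + jacTerm (Pv d) (Pv b) x (cF Pv B β q2 x) (cF Pv B γ q3 x) (cF Pv B α q1 x)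
          + jacTerm (Pv d) (Pv b) x (cF Pv B γ q3 x) (cF Pv B α q1 x) (cF Pv B β q2 x)) = 0 := by
      rw [← T5_group32 n (fun q1 q2 q3 d b =>
        jacTerm (Pv d) (Pv b) x (cF Pv B α q1 x) (cF Pv B β q2 x) (cF Pv B γ q3 x)
          + jacTerm (Pv d) (Pv b) x (cF Pv B β q2 x) (cF Pv B γ q3 x) (cF Pv B α q1 x)
          + jacTerm (Pv d) (Pv b) x (cF Pv B γ q3 x) (cF Pv B α q1 x) (cF Pv B β q2 x))]
      calc T2 n (fun L m => T3 L (fun q1 q2 q3 => T2 m (fun d b =>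
            jacTerm (Pv d) (Pv b) x (cF Pv B α q1 x) (cF Pv B β q2 x) (cF Pv B γ q3 x)
              + jacTerm (Pv d) (Pv b) x (cF Pv B β q2 x) (cF Pv B γ q3 x) (cF Pv B α q1 x)
              + jacTerm (Pv d) (Pv b) x (cF Pv B γ q3 x) (cF Pv B α q1 x) (cF Pv B β q2 x))))
          = T2 n (fun L m => T3 L (fun q1 q2 q3 => (0:ℝ))) := by
            refine T2_congr fun L m _ => T3_congr fun q1 q2 q3 _ => ?_
            have hp := hP m x (cF Pv B α q1 x) (cF Pv B β q2 x) (cF Pv B γ q3 x)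
            rw [ad_eq_T2 m (fun d b =>
              jacTerm (Pv d) (Pv b) x (cF Pv B α q1 x) (cF Pv B β q2 x) (cF Pv B γ q3 x)
                + jacTerm (Pv d) (Pv b) x (cF Pv B β q2 x) (cF Pv B γ q3 x) (cF Pv B α q1 x)
                + jacTerm (Pv d) (Pv b) x (cF Pv B γ q3 x) (cF Pv B α q1 x) (cF Pv B β q2 x))] at hp
            exact hp
        _ = 0 := by
            rw [show (fun (L m : ℕ) => T3 L (fun q1 q2 q3 => (0:ℝ)))
                = fun (L m : ℕ) => (0:ℝ) from funext fun L => funext fun m => T3_zero L]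
            exact T2_zero n
    calc T5 n _ = T5 n (fun q1 q2 q3 d b =>
          jacTerm (Pv d) (Pv b) x (cF Pv B α q1 x) (cF Pv B β q2 x) (cF Pv B γ q3 x)
            + jacTerm (Pv d) (Pv b) x (cF Pv B β q2 x) (cF Pv B γ q3 x) (cF Pv B α q1 x)
            + jacTerm (Pv d) (Pv b) x (cF Pv B γ q3 x) (cF Pv B α q1 x) (cF Pv B β q2 x)) := by
          refine T5_congr fun q1 q2 q3 d b _ => ?_
          beta_reduce
          ring
      _ = 0 := hz
  -- assemble
  calc ∑ p ∈ antidiagonal n,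
        (jacTerm (tauS Pv B p.1) (tauS Pv B p.2) x α β γ
          + jacTerm (tauS Pv B p.1) (tauS Pv B p.2) x β γ α
          + jacTerm (tauS Pv B p.1) (tauS Pv B p.2) x γ α β)
      = T2 n (fun i j =>
          jacTerm (tauS Pv B i) (tauS Pv B j) x α β γ
            + jacTerm (tauS Pv B i) (tauS Pv B j) x β γ α
            + jacTerm (tauS Pv B i) (tauS Pv B j) x γ α β) :=
        ad_eq_T2 n (fun i j =>
          jacTerm (tauS Pv B i) (tauS Pv B j) x α β γ
            + jacTerm (tauS Pv B i) (tauS Pv B j) x β γ α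
            + jacTerm (tauS Pv B i) (tauS Pv B j) x γ α β)
    _ = T2 n (fun i j =>
          (T3 j (fun a b c =>
            cF Pv B γ a x ((fderiv ℝ (Pv b) x (vF Pv B α i x)) (cF Pv B β c x)))
          + T3 j (fun a b c =>
            (fderiv ℝ (B a) x (vF Pv B α i x)) (vF Pv B β b x) (vF Pv B γ c x)))
          + (T3 j (fun a b c =>
            cF Pv B α a x ((fderiv ℝ (Pv b) x (vF Pv B β i x)) (cF Pv B γ c x)))
          + T3 j (fun a b c =>
            (fderiv ℝ (B a) x (vF Pv B β i x)) (vF Pv B γ b x) (vF Pv B α c x)))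
          + (T3 j (fun a b c =>
            cF Pv B β a x ((fderiv ℝ (Pv b) x (vF Pv B γ i x)) (cF Pv B α c x)))
          + T3 j (fun a b c =>
            (fderiv ℝ (B a) x (vF Pv B γ i x)) (vF Pv B α b x) (vF Pv B β c x)))) := by
        refine T2_congr fun i j _ => ?_
        rw [jkey α β γ i j, jkey β γ α i j, jkey γ α β i j]
    _ = 0 := by
        rw [T2_add, T2_add, T2_add, T2_add, T2_add]
        linarith [D1, D2]

end Geometry

end S17

theorem stmt_17 (Pv : ℕ → E → ((E →L[ℝ] ℝ) →L[ℝ] E))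
    (hsm : ∀ n, ContDiff ℝ (⊤ : ℕ∞) (Pv n))
    (hanti : ∀ (n : ℕ) (x : E) (α β : E →L[ℝ] ℝ), α (Pv n x β) = - β (Pv n x α))
    (h0 : ∀ x, Pv 0 x = 0)
    (hP : IsFormalPoisson Pv)
    (B : ℕ → E → (E →L[ℝ] E →L[ℝ] ℝ))
    (hBsm : ∀ n, ContDiff ℝ (⊤ : ℕ∞) (B n))
    (hBanti : ∀ (n : ℕ) (x : E) (u v : E), B n x u v = - B n x v u)
    (hBcl : ∀ n, ClosedForm (B n)) :
    Function.Bijective (gaugeOp B Pv) ∧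
    ∃ Pv' : ℕ → E → ((E →L[ℝ] ℝ) →L[ℝ] E),
      (∀ n, ContDiff ℝ (⊤ : ℕ∞) (Pv' n)) ∧
      (∀ (n : ℕ) (x : E) (α β : E →L[ℝ] ℝ), α (Pv' n x β) = - β (Pv' n x α)) ∧
      (∀ α : ℕ → E → (E →L[ℝ] ℝ), sharpF Pv' (gaugeOp B Pv α) = sharpF Pv α) ∧
      IsFormalPoisson Pv' := by
  refine ⟨?_, S17.tauS Pv B, S17.tauS_contDiff Pv B hsm hBsm,
    S17.tauS_anti Pv B h0 hanti hBanti, ?_,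
    S17.tau_poisson Pv B h0 hsm hBsm hanti hBanti hP hBcl⟩
  · exact Function.bijective_iff_has_inverse.mpr
      ⟨S17.gInv Pv B, S17.gauge_left_inv Pv B h0, S17.gauge_right_inv Pv B h0⟩
  · intro α
    funext n x
    exact S17.sharp_gauge Pv B h0 α n x
end
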